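/- arXiv:1603.01720 — 6 statements merged into one kernel-verified Lean document; each statement's English description precedes it below -/
import Mathlib

section
/- Let a, b be real numbers with a > -1, |b| < 1 and |b| < 1 + a. Then there exist constants c, C > 0, depending only on a and b, such that for all s, t ≥ 0: c · (max(t,s))^a · |t-s|^{1+b} ≤ t^{1+a+b} + s^{1+a+b} - 2·R_{a,b}(t,s) ≤ C · (max(t,s))^a · |t-s|^{1+b}. (Here t^{1+a+b} + s^{1+a+b} - 2·R_{a,b}(t,s) equals E[(B^{a,b}_t - B^{a,b}_s)^2] for the weighted fractional Brownian motion.) -/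
open Real MeasureTheory

/-- The Euler Beta function. -/
noncomputable def Beta (x y : ℝ) : ℝ := Real.Gamma x * Real.Gamma y / Real.Gamma (x + y)

/-- The covariance function `R_{a,b}(t,s)` of the weighted fractional Brownian motion. -/
noncomputable def R (a b t s : ℝ) : ℝ :=
  (1 / (2 * Beta (a + 1) (b + 1))) *
    ∫ u in (0:ℝ)..(min t s), u ^ a * ((t - u) ^ b + (s - u) ^ b)

lemma beta_pos {a b : ℝ} (ha : -1 < a) (hb : -1 < b) : 0 < Beta (a+1) (b+1) := by
  have h1 : 0 < Real.Gamma (a+1) := Real.Gamma_pos_of_pos (by linarith)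
  have h2 : 0 < Real.Gamma (b+1) := Real.Gamma_pos_of_pos (by linarith)
  have h3 : 0 < Real.Gamma ((a+1)+(b+1)) := Real.Gamma_pos_of_pos (by linarith)
  exact div_pos (mul_pos h1 h2) h3

lemma beta_integral_eq {a b : ℝ} (ha : -1 < a) (hb : -1 < b) :
    ∫ x in (0:ℝ)..1, x ^ a * (1 - x) ^ b = Beta (a+1) (b+1) := by
  have hs : 0 < Complex.re ((a:ℂ)+1) := by simp; linarith
  have ht : 0 < Complex.re ((b:ℂ)+1) := by simp; linarith
  have key := Complex.Gamma_mul_Gamma_eq_betaIntegral hs ht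
  have hint : Complex.betaIntegral ((a:ℂ)+1) ((b:ℂ)+1)
      = ((∫ x in (0:ℝ)..1, x ^ a * (1 - x) ^ b : ℝ) : ℂ) := by
    rw [Complex.betaIntegral, ← intervalIntegral.integral_ofReal]
    apply intervalIntegral.integral_congr
    intro x hx
    rw [Set.uIcc_of_le (by norm_num : (0:ℝ) ≤ 1)] at hx
    have hx0 : (0:ℝ) ≤ x := hx.1
    have hx1 : (0:ℝ) ≤ 1 - x := by linarith [hx.2]
    simp only [Complex.ofReal_mul]
    rw [Complex.ofReal_cpow hx0, Complex.ofReal_cpow hx1]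
    push_cast
    ring_nf
  rw [hint] at key
  have e1 : ((a:ℂ)+1) = ((a+1:ℝ):ℂ) := by push_cast; ring
  have e2 : ((b:ℂ)+1) = ((b+1:ℝ):ℂ) := by push_cast; ring
  rw [e1, e2, ← Complex.ofReal_add, Complex.Gamma_ofReal, Complex.Gamma_ofReal,
    Complex.Gamma_ofReal, ← Complex.ofReal_mul, ← Complex.ofReal_mul] at key
  have key3 := Complex.ofReal_injective key
  have h3 : 0 < Real.Gamma ((a+1)+(b+1)) := Real.Gamma_pos_of_pos (by linarith)
  rw [Beta]
  field_simp
  linarith [key3]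

lemma contOn_sub_rpow {b t c d : ℝ} (h : ∀ x ∈ Set.uIcc c d, t - x ≠ 0) :
    ContinuousOn (fun u : ℝ => (t - u) ^ b) (Set.uIcc c d) :=
  ContinuousOn.rpow_const (continuous_const.sub continuous_id).continuousOn
    (fun x hx => Or.inl (h x hx))

lemma integrable_sub_rpow {b : ℝ} (hb : -1 < b) (t c d : ℝ) :
    IntervalIntegrable (fun u : ℝ => (t - u) ^ b) volume c d := by
  have h1 : IntervalIntegrable (fun x : ℝ => x ^ b) volume (t - c) (t - d) :=
    intervalIntegral.intervalIntegrable_rpow' hb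
  simpa using h1.comp_sub_left t

lemma integrable_main {a b : ℝ} (ha : -1 < a) (hb : -1 < b) {t : ℝ} (ht : 0 ≤ t) :
    IntervalIntegrable (fun u : ℝ => u ^ a * (t - u) ^ b) volume 0 t := by
  rcases eq_or_lt_of_le ht with rfl|ht
  · exact IntervalIntegrable.refl
  · apply IntervalIntegrable.trans (b := t/2)
    · apply (intervalIntegral.intervalIntegrable_rpow' ha).mul_continuousOn
      apply contOn_sub_rpow
      intro x hx
      rw [Set.uIcc_of_le (by linarith)] at hx
      exact ne_of_gt (by linarith [hx.2])
    · apply (integrable_sub_rpow hb t (t/2) t).continuousOn_mul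
      apply ContinuousOn.rpow_const continuous_id.continuousOn
      intro x hx
      rw [Set.uIcc_of_le (by linarith)] at hx
      exact Or.inl (ne_of_gt (show (0:ℝ) < id x by simp only [id_eq]; linarith [hx.1]))

lemma beta_scaled {a b : ℝ} (ha : -1 < a) (hb : -1 < b) (hab : 0 < 1+a+b) {t : ℝ} (ht : 0 ≤ t) :
    ∫ u in (0:ℝ)..t, u ^ a * (t - u) ^ b = Beta (a+1) (b+1) * t ^ (1+a+b) := by
  rcases eq_or_lt_of_le ht with rfl|ht
  · simp [Real.zero_rpow (ne_of_gt hab)]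
  · have hsub := intervalIntegral.smul_integral_comp_mul_left
      (f := fun u : ℝ => u ^ a * (t - u) ^ b) (a := 0) (b := 1) t
    simp only [mul_zero, mul_one] at hsub
    rw [← hsub]
    have hcong : Set.EqOn (fun x : ℝ => (t*x)^a * (t - t*x)^b)
        (fun x : ℝ => t^(a+b) * (x^a * (1-x)^b)) (Set.uIcc 0 1) := by
      intro x hx
      rw [Set.uIcc_of_le (by norm_num : (0:ℝ) ≤ 1)] at hx
      have hx0 : 0 ≤ x := hx.1
      have hx1 : 0 ≤ 1 - x := by linarith [hx.2]
      simp only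
      rw [Real.mul_rpow (le_of_lt ht) hx0, show t - t*x = t*(1-x) by ring,
        Real.mul_rpow (le_of_lt ht) hx1, Real.rpow_add ht]
      ring
    have hpow : t ^ (1+a+b) = t * (t^a * t^b) := by
      rw [show (1+a+b) = 1+(a+b) by ring, Real.rpow_add ht, Real.rpow_one, Real.rpow_add ht]
    rw [intervalIntegral.integral_congr hcong, intervalIntegral.integral_const_mul,
      beta_integral_eq ha hb, smul_eq_mul, hpow, Real.rpow_add ht]
    ring

lemma E_eq {a b : ℝ} (ha : -1 < a) (hb : -1 < b) (hab : 0 < 1+a+b) {s t : ℝ}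
    (hs : 0 ≤ s) (hst : s ≤ t) :
    t ^ (1+a+b) + s ^ (1+a+b) - 2 * R a b t s
      = (1 / Beta (a+1) (b+1)) * ∫ u in s..t, u ^ a * (t - u) ^ b := by
  have hB := beta_pos ha hb
  have ht : 0 ≤ t := le_trans hs hst
  rw [R, min_eq_right hst]
  have hsub1 : Set.uIcc (0:ℝ) s ⊆ Set.uIcc (0:ℝ) t := by
    rw [Set.uIcc_of_le hs, Set.uIcc_of_le ht]; exact Set.Icc_subset_Icc le_rfl hst
  have hsub2 : Set.uIcc s t ⊆ Set.uIcc (0:ℝ) t := by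
    rw [Set.uIcc_of_le hst, Set.uIcc_of_le ht]; exact Set.Icc_subset_Icc hs le_rfl
  have hint1 : IntervalIntegrable (fun u : ℝ => u^a*(t-u)^b) volume 0 s :=
    (integrable_main ha hb ht).mono_set hsub1
  have hint1' : IntervalIntegrable (fun u : ℝ => u^a*(t-u)^b) volume s t :=
    (integrable_main ha hb ht).mono_set hsub2
  have hint2 : IntervalIntegrable (fun u : ℝ => u^a*(s-u)^b) volume 0 s :=
    integrable_main ha hb hs
  have hsplit : (∫ u in (0:ℝ)..s, u^a*((t-u)^b + (s-u)^b))
      = (∫ u in (0:ℝ)..s, u^a*(t-u)^b) + ∫ u in (0:ℝ)..s, u^a*(s-u)^b := by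
    rw [← intervalIntegral.integral_add hint1 hint2]
    apply intervalIntegral.integral_congr
    intro x _
    simp only
    ring
  have hadj : (∫ u in (0:ℝ)..s, u^a*(t-u)^b) + (∫ u in s..t, u^a*(t-u)^b)
      = ∫ u in (0:ℝ)..t, u^a*(t-u)^b :=
    intervalIntegral.integral_add_adjacent_intervals hint1 hint1'
  rw [beta_scaled ha hb hab ht] at hadj
  have hI : (∫ u in (0:ℝ)..s, u^a*(t-u)^b)
      = Beta (a+1) (b+1) * t^(1+a+b) - ∫ u in s..t, u^a*(t-u)^b := by linarith [hadj]
  rw [hsplit, beta_scaled ha hb hab hs, hI]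
  field_simp
  ring

lemma rpow_half_bounds {a t u : ℝ} (ht : 0 < t) (h1 : t/2 ≤ u) (h2 : u ≤ t) :
    u ^ a ≤ max 1 (2^(-a)) * t^a ∧ min 1 (2^(-a)) * t^a ≤ u^a := by
  have hu : 0 < u := lt_of_lt_of_le (by linarith) h1
  have hta : 0 ≤ t ^ a := Real.rpow_nonneg ht.le a
  have hhalf : (t/2)^a = 2^(-a) * t^a := by
    rw [Real.div_rpow ht.le (by norm_num : (0:ℝ) ≤ 2),
      Real.rpow_neg (by norm_num : (0:ℝ) ≤ 2), div_eq_mul_inv, mul_comm]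
  constructor
  · rcases le_or_gt 0 a with hA|hA
    · have h := Real.rpow_le_rpow hu.le h2 hA
      nlinarith [le_max_left (1:ℝ) (2^(-a))]
    · have h := Real.rpow_le_rpow_of_nonpos (by linarith : (0:ℝ) < t/2) h1 hA.le
      rw [hhalf] at h
      nlinarith [le_max_right (1:ℝ) (2^(-a))]
  · rcases le_or_gt 0 a with hA|hA
    · have h := Real.rpow_le_rpow (by linarith : (0:ℝ) ≤ t/2) h1 hA
      rw [hhalf] at h
      nlinarith [min_le_right (1:ℝ) (2^(-a))]
    · have h := Real.rpow_le_rpow_of_nonpos hu h2 hA.le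
      nlinarith [min_le_left (1:ℝ) (2^(-a))]

lemma integral_sub_rpow_eq {b : ℝ} (hb : -1 < b) {m t : ℝ} :
    ∫ u in m..t, (t-u)^b = (t-m)^(1+b)/(1+b) := by
  have h1 : (∫ u in m..t, (t-u)^b) = ∫ x in (t-t)..(t-m), x^b :=
    intervalIntegral.integral_comp_sub_left (fun x : ℝ => x^b) t
  rw [h1, sub_self, integral_rpow (Or.inl hb),
    Real.zero_rpow (by linarith : b+1 ≠ 0), sub_zero, add_comm b 1]

lemma core_lower {a b : ℝ} (ha : -1 < a) (hb : -1 < b) {s t : ℝ} (hs : 0 ≤ s) (hst : s ≤ t) :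
    min 1 (2^(-a)) / ((1+b) * 2^(1+b)) * (t^a * (t-s)^(1+b))
      ≤ ∫ u in s..t, u^a*(t-u)^b := by
  have hb1 : (0:ℝ) < 1 + b := by linarith
  have h2b : (0:ℝ) < 2^(1+b) := Real.rpow_pos_of_pos (by norm_num) _
  rcases eq_or_lt_of_le hst with rfl|hst
  · simp [Real.zero_rpow (by linarith : (1:ℝ)+b ≠ 0)]
  have ht : 0 < t := lt_of_le_of_lt hs hst
  set m := (s+t)/2 with hm
  have hsm : s ≤ m := by simp only [hm]; linarith
  have hmt : m ≤ t := by simp only [hm]; linarith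
  have hsub1 : Set.uIcc s m ⊆ Set.uIcc 0 t := by
    rw [Set.uIcc_of_le hsm, Set.uIcc_of_le ht.le]
    exact Set.Icc_subset_Icc hs (by linarith)
  have hsub2 : Set.uIcc m t ⊆ Set.uIcc 0 t := by
    rw [Set.uIcc_of_le hmt, Set.uIcc_of_le ht.le]
    exact Set.Icc_subset_Icc (by linarith) le_rfl
  have hIsm : IntervalIntegrable (fun u : ℝ => u^a*(t-u)^b) volume s m :=
    (integrable_main ha hb ht.le).mono_set hsub1
  have hImt : IntervalIntegrable (fun u : ℝ => u^a*(t-u)^b) volume m t :=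
    (integrable_main ha hb ht.le).mono_set hsub2
  have hsplit : (∫ u in s..t, u^a*(t-u)^b)
      = (∫ u in s..m, u^a*(t-u)^b) + ∫ u in m..t, u^a*(t-u)^b :=
    (intervalIntegral.integral_add_adjacent_intervals hIsm hImt).symm
  have hnonneg : 0 ≤ ∫ u in s..m, u^a*(t-u)^b := by
    apply intervalIntegral.integral_nonneg hsm
    intro x hx
    exact mul_nonneg (Real.rpow_nonneg (le_trans hs hx.1) a)
      (Real.rpow_nonneg (by linarith [hx.2] : (0:ℝ) ≤ t - x) b)
  have hmono : (∫ u in m..t, (min 1 (2^(-a)) * t^a) * (t-u)^b)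
      ≤ ∫ u in m..t, u^a*(t-u)^b := by
    apply intervalIntegral.integral_mono_on hmt
      ((integrable_sub_rpow hb t m t).const_mul _) hImt
    intro x hx
    have hbd := (rpow_half_bounds (a := a) ht (by linarith [hx.1]) hx.2).2
    exact mul_le_mul_of_nonneg_right hbd (Real.rpow_nonneg (by linarith [hx.2]) b)
  rw [intervalIntegral.integral_const_mul, integral_sub_rpow_eq hb] at hmono
  have htm2 : t - m = (t-s)/2 := by simp only [hm]; ring
  have hdiv : (t-m)^(1+b) = (t-s)^(1+b) / 2^(1+b) := by
    rw [htm2, Real.div_rpow (by linarith : (0:ℝ) ≤ t - s) (by norm_num : (0:ℝ) ≤ 2)]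
  rw [hdiv] at hmono
  calc min 1 (2^(-a)) / ((1+b) * 2^(1+b)) * (t^a * (t-s)^(1+b))
      = min 1 (2^(-a)) * t^a * ((t-s)^(1+b) / 2^(1+b) / (1+b)) := by
        field_simp
    _ ≤ ∫ u in m..t, u^a*(t-u)^b := hmono
    _ ≤ ∫ u in s..t, u^a*(t-u)^b := by rw [hsplit]; linarith

lemma core_upper {a b : ℝ} (ha : -1 < a) (hb : -1 < b) {s t : ℝ} (hs : 0 ≤ s) (hst : s ≤ t) :
    ∫ u in s..t, u^a*(t-u)^b
      ≤ (max 1 (2^(-a))/(1+b) + max 1 (2^(-b)) * max (max 1 (2^(-a))) (2/(1+a)))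
          * (t^a * (t-s)^(1+b)) := by
  have hb1 : (0:ℝ) < 1 + b := by linarith
  have ha1 : (0:ℝ) < 1 + a := by linarith
  set K1 := max (1:ℝ) (2^(-a)) with hK1
  set K2 := max (1:ℝ) (2^(-b)) with hK2
  set K3 := max K1 (2/(1+a)) with hK3
  have hK1pos : (0:ℝ) < K1 := lt_of_lt_of_le one_pos (le_max_left _ _)
  have hK2pos : (0:ℝ) < K2 := lt_of_lt_of_le one_pos (le_max_left _ _)
  have hK3pos : (0:ℝ) < K3 := lt_of_lt_of_le hK1pos (le_max_left _ _)
  rcases eq_or_lt_of_le hst with rfl|hst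
  · simp [Real.zero_rpow (by linarith : (1:ℝ)+b ≠ 0)]
  have ht : 0 < t := lt_of_le_of_lt hs hst
  have hts : 0 < t - s := by linarith
  have hta : 0 ≤ t ^ a := Real.rpow_nonneg ht.le a
  set m := (s+t)/2 with hm
  have hsm : s ≤ m := by simp only [hm]; linarith
  have hmt : m ≤ t := by simp only [hm]; linarith
  have hsub1 : Set.uIcc s m ⊆ Set.uIcc 0 t := by
    rw [Set.uIcc_of_le hsm, Set.uIcc_of_le ht.le]
    exact Set.Icc_subset_Icc hs (by linarith)
  have hsub2 : Set.uIcc m t ⊆ Set.uIcc 0 t := by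
    rw [Set.uIcc_of_le hmt, Set.uIcc_of_le ht.le]
    exact Set.Icc_subset_Icc (by linarith) le_rfl
  have hIsm : IntervalIntegrable (fun u : ℝ => u^a*(t-u)^b) volume s m :=
    (integrable_main ha hb ht.le).mono_set hsub1
  have hImt : IntervalIntegrable (fun u : ℝ => u^a*(t-u)^b) volume m t :=
    (integrable_main ha hb ht.le).mono_set hsub2
  have hsplit : (∫ u in s..t, u^a*(t-u)^b)
      = (∫ u in s..m, u^a*(t-u)^b) + ∫ u in m..t, u^a*(t-u)^b :=
    (intervalIntegral.integral_add_adjacent_intervals hIsm hImt).symm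
  -- Part A : the integral over [m, t]
  have hA : (∫ u in m..t, u^a*(t-u)^b) ≤ K1/(1+b) * (t^a * (t-s)^(1+b)) := by
    have hmono : (∫ u in m..t, u^a*(t-u)^b)
        ≤ ∫ u in m..t, (K1 * t^a) * (t-u)^b := by
      apply intervalIntegral.integral_mono_on hmt hImt
        ((integrable_sub_rpow hb t m t).const_mul _)
      intro x hx
      exact mul_le_mul_of_nonneg_right ((rpow_half_bounds ht (by linarith [hx.1]) hx.2).1)
        (Real.rpow_nonneg (by linarith [hx.2]) b)
    rw [intervalIntegral.integral_const_mul, integral_sub_rpow_eq hb] at hmono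
    have hle : (t-m)^(1+b) ≤ (t-s)^(1+b) :=
      Real.rpow_le_rpow (by linarith) (by linarith) hb1.le
    calc (∫ u in m..t, u^a*(t-u)^b) ≤ K1 * t^a * ((t-m)^(1+b)/(1+b)) := hmono
      _ ≤ K1 * t^a * ((t-s)^(1+b)/(1+b)) := by
          apply mul_le_mul_of_nonneg_left _ (mul_nonneg hK1pos.le hta)
          exact (div_le_div_iff_of_pos_right hb1).mpr hle
      _ = K1/(1+b) * (t^a * (t-s)^(1+b)) := by ring
  -- Part B : the integral over [s, m]
  have hint_a : ∀ c d : ℝ, IntervalIntegrable (fun x : ℝ => x ^ a) volume c d :=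
    fun c d => intervalIntegral.intervalIntegrable_rpow' ha
  have hBint : (∫ u in s..m, u^a) ≤ K3 * (t^a * (t-s)) := by
    rcases le_or_gt (t/2) s with hc|hc
    · have hmono : (∫ u in s..m, u^a) ≤ ∫ u in s..m, K1 * t^a := by
        apply intervalIntegral.integral_mono_on hsm (hint_a s m) intervalIntegrable_const
        intro x hx
        exact (rpow_half_bounds ht (by linarith [hx.1]) (by linarith [hx.2])).1
      rw [intervalIntegral.integral_const, smul_eq_mul] at hmono
      have hK13 : K1 ≤ K3 := le_max_left _ _
      have hms : m - s = (t-s)/2 := by simp only [hm]; ring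
      have hX : K1 * t^a ≤ K3 * t^a := mul_le_mul_of_nonneg_right hK13 hta
      calc (∫ u in s..m, u^a) ≤ (m - s) * (K1 * t^a) := hmono
        _ = (t-s)/2 * (K1 * t^a) := by rw [hms]
        _ ≤ (t-s)/2 * (K3 * t^a) := mul_le_mul_of_nonneg_left hX (by linarith)
        _ ≤ (t-s) * (K3 * t^a) :=
            mul_le_mul_of_nonneg_right (by linarith) (mul_nonneg hK3pos.le hta)
        _ = K3 * (t^a * (t-s)) := by ring
    · have h0s : 0 ≤ ∫ u in (0:ℝ)..s, u^a :=
        intervalIntegral.integral_nonneg hs (fun x hx => Real.rpow_nonneg hx.1 a)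
      have hmt' : 0 ≤ ∫ u in m..t, u^a :=
        intervalIntegral.integral_nonneg hmt
          (fun x hx => Real.rpow_nonneg (by linarith [hx.1] : (0:ℝ) ≤ x) a)
      have hfull : (∫ u in (0:ℝ)..s, u^a) + ((∫ u in s..m, u^a) + ∫ u in m..t, u^a)
          = ∫ u in (0:ℝ)..t, u^a := by
        rw [intervalIntegral.integral_add_adjacent_intervals (hint_a s m) (hint_a m t)]
        exact intervalIntegral.integral_add_adjacent_intervals (hint_a 0 s) (hint_a s t)
      have hval : (∫ u in (0:ℝ)..t, u^a) = t^a * t / (a+1) := by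
        rw [integral_rpow (Or.inl ha), Real.zero_rpow (by linarith : a+1 ≠ 0), sub_zero,
          Real.rpow_add ht, Real.rpow_one]
      have hstep : t^a * t / (a+1) ≤ 2/(1+a) * (t^a * (t-s)) := by
        rw [div_le_iff₀ (by linarith : (0:ℝ) < a+1)]
        have hmm : t^a * t ≤ t^a * (2*(t-s)) :=
          mul_le_mul_of_nonneg_left (by linarith) hta
        calc t^a * t ≤ t^a * (2*(t-s)) := hmm
          _ = 2/(1+a) * (t^a*(t-s)) * (a+1) := by field_simp; ring
      have hK23 : 2/(1+a) ≤ K3 := le_max_right _ _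
      have hle2 : (∫ u in s..m, u^a) ≤ t^a * t / (a+1) := by
        rw [← hval] at *
        linarith [hfull]
      calc (∫ u in s..m, u^a) ≤ t^a * t / (a+1) := hle2
        _ ≤ 2/(1+a) * (t^a * (t-s)) := hstep
        _ ≤ K3 * (t^a * (t-s)) := by
            apply mul_le_mul_of_nonneg_right hK23
            exact mul_nonneg hta (by linarith)
  have hB : (∫ u in s..m, u^a*(t-u)^b) ≤ K2 * K3 * (t^a * (t-s)^(1+b)) := by
    have hmono : (∫ u in s..m, u^a*(t-u)^b)
        ≤ ∫ u in s..m, u^a * (K2 * (t-s)^b) := by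
      apply intervalIntegral.integral_mono_on hsm hIsm ((hint_a s m).mul_const _)
      intro x hx
      have hbd := (rpow_half_bounds (a := b) (t := t - s) (u := t - x) hts
        (by simp only [hm] at hx ⊢; linarith [hx.2]) (by linarith [hx.1])).1
      exact mul_le_mul_of_nonneg_left hbd (Real.rpow_nonneg (le_trans hs hx.1) a)
    rw [intervalIntegral.integral_mul_const] at hmono
    have hKb : 0 ≤ K2 * (t-s)^b := mul_nonneg hK2pos.le (Real.rpow_nonneg hts.le b)
    have h2 : (∫ u in s..m, u^a) * (K2 * (t-s)^b) ≤ K3 * (t^a * (t-s)) * (K2 * (t-s)^b) :=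
      mul_le_mul_of_nonneg_right hBint hKb
    have hpow : (t-s)^(1+b) = (t-s) * (t-s)^b := by
      rw [Real.rpow_add hts, Real.rpow_one]
    calc (∫ u in s..m, u^a*(t-u)^b) ≤ (∫ u in s..m, u^a) * (K2 * (t-s)^b) := hmono
      _ ≤ K3 * (t^a * (t-s)) * (K2 * (t-s)^b) := h2
      _ = K2 * K3 * (t^a * (t-s)^(1+b)) := by rw [hpow]; ring
  rw [hsplit]
  have hfin : K2 * K3 * (t^a * (t-s)^(1+b)) + K1/(1+b) * (t^a * (t-s)^(1+b))
      = (K1/(1+b) + K2*K3) * (t^a * (t-s)^(1+b)) := by ring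
  linarith [hA, hB]

lemma R_symm (a b t s : ℝ) : R a b t s = R a b s t := by
  unfold R
  rw [min_comm]
  congr 1
  apply intervalIntegral.integral_congr
  intro x _
  simp only
  ring

lemma main_ordered {a b : ℝ} (ha : -1 < a) (hbl : -1 < b) (hab : 0 < 1+a+b) {s t : ℝ}
    (hs : 0 ≤ s) (hst : s ≤ t) :
    min 1 (2^(-a)) / ((1+b) * 2^(1+b)) / Beta (a+1) (b+1) * t^a * (t-s)^(1+b)
      ≤ t ^ (1+a+b) + s ^ (1+a+b) - 2 * R a b t s ∧
    t ^ (1+a+b) + s ^ (1+a+b) - 2 * R a b t s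
      ≤ (max 1 (2^(-a))/(1+b) + max 1 (2^(-b)) * max (max 1 (2^(-a))) (2/(1+a)))
          / Beta (a+1) (b+1) * t^a * (t-s)^(1+b) := by
  have hB := beta_pos ha hbl
  have hE := E_eq ha hbl hab hs hst
  have hlo := core_lower ha hbl hs hst
  have hhi := core_upper ha hbl hs hst
  constructor
  · rw [hE]
    have h := mul_le_mul_of_nonneg_left hlo (le_of_lt (by positivity : (0:ℝ) < 1/Beta (a+1) (b+1)))
    calc min 1 (2^(-a)) / ((1+b) * 2^(1+b)) / Beta (a+1) (b+1) * t^a * (t-s)^(1+b)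
        = 1/Beta (a+1) (b+1) * (min 1 (2^(-a)) / ((1+b) * 2^(1+b)) * (t^a * (t-s)^(1+b))) := by
          ring
      _ ≤ 1/Beta (a+1) (b+1) * ∫ u in s..t, u^a*(t-u)^b := h
  · rw [hE]
    have h := mul_le_mul_of_nonneg_left hhi (le_of_lt (by positivity : (0:ℝ) < 1/Beta (a+1) (b+1)))
    calc 1/Beta (a+1) (b+1) * ∫ u in s..t, u^a*(t-u)^b
        ≤ 1/Beta (a+1) (b+1) * ((max 1 (2^(-a))/(1+b) + max 1 (2^(-b)) * max (max 1 (2^(-a))) (2/(1+a)))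
          * (t^a * (t-s)^(1+b))) := h
      _ = (max 1 (2^(-a))/(1+b) + max 1 (2^(-b)) * max (max 1 (2^(-a))) (2/(1+a)))
          / Beta (a+1) (b+1) * t^a * (t-s)^(1+b) := by ring

theorem stmt_0 (a b : ℝ) (ha : -1 < a) (hb1 : |b| < 1) (hb2 : |b| < 1 + a) :
    ∃ c > (0:ℝ), ∃ C > (0:ℝ), ∀ s t : ℝ, 0 ≤ s → 0 ≤ t →
      c * (max t s) ^ a * |t - s| ^ (1 + b) ≤
          t ^ (1 + a + b) + s ^ (1 + a + b) - 2 * R a b t s ∧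
        t ^ (1 + a + b) + s ^ (1 + a + b) - 2 * R a b t s ≤
          C * (max t s) ^ a * |t - s| ^ (1 + b) := by
  obtain ⟨hbl, hbu⟩ := abs_lt.mp hb1
  obtain ⟨hbl2, _⟩ := abs_lt.mp hb2
  have hab : 0 < 1 + a + b := by linarith
  have hB := beta_pos ha hbl
  have hb1' : (0:ℝ) < 1 + b := by linarith
  have ha1 : (0:ℝ) < 1 + a := by linarith
  have h2b : (0:ℝ) < 2^(1+b) := Real.rpow_pos_of_pos (by norm_num) _
  have h2a : (0:ℝ) < 2^(-a) := Real.rpow_pos_of_pos (by norm_num) _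
  refine ⟨min 1 (2^(-a)) / ((1+b) * 2^(1+b)) / Beta (a+1) (b+1), ?_,
    (max 1 (2^(-a))/(1+b) + max 1 (2^(-b)) * max (max 1 (2^(-a))) (2/(1+a)))
      / Beta (a+1) (b+1), ?_, ?_⟩
  · apply div_pos (div_pos (lt_min one_pos h2a) (mul_pos hb1' h2b)) hB
  · apply div_pos _ hB
    have h1 : (0:ℝ) < max 1 (2^(-a))/(1+b) :=
      div_pos (lt_of_lt_of_le one_pos (le_max_left _ _)) hb1'
    have h2 : (0:ℝ) ≤ max 1 (2^(-b)) * max (max 1 (2^(-a))) (2/(1+a)) := by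
      apply mul_nonneg (le_of_lt (lt_of_lt_of_le one_pos (le_max_left _ _)))
      exact le_of_lt (lt_of_lt_of_le (lt_of_lt_of_le one_pos (le_max_left _ _)) (le_max_left _ _))
    linarith
  · intro s t hs ht
    rcases le_total s t with hst|hst
    · have h := main_ordered ha hbl hab hs hst
      rw [max_eq_left hst, abs_of_nonneg (by linarith : (0:ℝ) ≤ t - s)]
      exact h
    · have h := main_ordered ha hbl hab ht hst
      rw [max_eq_right hst, abs_of_nonpos (by linarith : t - s ≤ 0), neg_sub,
        R_symm a b t s]
      constructor
      · have := h.1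
        linarith [h.1]
      · linarith [h.2]
end

section
/- Let a, b be real numbers with a > -1, |b| < 1 and |b| < 1 + a, and set K = Β(a+1,b+1). Define G₁(x) = 2K·x^{(1+a+b)/2} - ∫_0^x u^a (1-u)^b du - K·x^{1+a+b} for x ∈ [0,1]. Then there exist constants c, C > 0, depending only on a and b, such that c · x^{(1+a+b)/2} · (1-x)^{1+b} ≤ G₁(x) ≤ C · x^{(1+a+b)/2} · (1-x)^{1+b} for all x ∈ [0,1]. -/
open Real MeasureTheory

/-!
Write `α = (1 + a + b) / 2`, `β = (1 + a - b) / 2` (both positive) and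
`K = Β(a + 1, b + 1) = ∫₀¹ u ^ a (1 - u) ^ b du`, so that
`G₁ x = ∫ₓ¹ u ^ a (1 - u) ^ b du - K (1 - x ^ α) ^ 2`.
Near `0`, `G₁ x = 2 K x ^ α - O(x ^ (α + β))` is comparable to `x ^ α`. Near `1` the integral is
comparable to `(1 - x) ^ (1 + b)`, while `K (1 - x ^ α) ^ 2 = O((1 - x) ^ 2)` is of smaller order
because `b < 1`. In between, `G₁' t = t ^ (α - 1) (2 K α (1 - t ^ α) - t ^ β (1 - t) ^ b)` changes
sign at most once, from `+` to `-`, because `t ^ β (1 - t) ^ b / (1 - t ^ α)` is increasing: its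
logarithmic derivative has the sign of `α (1 - t) - b (1 - t ^ α) ≥ 0`. So on a compact subinterval
of `(0, 1)`, `G₁` is bounded below by its values at the endpoints.
-/

open Set Filter Topology

namespace Real

theorem min_one_rpow_le_rpow {u : ℝ} (a : ℝ) (hu : 1 / 2 ≤ u) (hu1 : u ≤ 1) :
    min 1 ((1 / 2) ^ a) ≤ u ^ a := by
  rcases le_total 0 a with ha | ha
  · exact (min_le_right _ _).trans (rpow_le_rpow (by norm_num) hu ha)
  · exact (min_le_left _ _).trans
      ((one_rpow a).symm.le.trans (rpow_le_rpow_of_nonpos (by linarith) hu1 ha))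

theorem rpow_le_max_one_rpow {u : ℝ} (a : ℝ) (hu : 1 / 2 ≤ u) (hu1 : u ≤ 1) :
    u ^ a ≤ max 1 ((1 / 2) ^ a) := by
  rcases le_total 0 a with ha | ha
  · exact (rpow_le_one (by linarith) hu1 ha).trans (le_max_left _ _)
  · exact (rpow_le_rpow_of_nonpos (by norm_num) hu ha).trans (le_max_right _ _)

theorem one_sub_rpow_le_max_mul {x α : ℝ} (hx : 0 ≤ x) (hx1 : x ≤ 1) (hα : 0 ≤ α) :
    1 - x ^ α ≤ max 1 α * (1 - x) := by
  rcases le_total α 1 with h | h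
  · have : x ^ (1 : ℝ) ≤ x ^ α := rpow_le_rpow_of_exponent_ge' hx hx1 hα h
    rw [rpow_one] at this
    rw [max_eq_left h]; linarith
  · have := one_add_mul_self_le_rpow_one_add (s := x - 1) (by linarith) h
    rw [add_sub_cancel] at this
    rw [max_eq_right h]; linarith

theorem mul_one_sub_rpow_le_mul_one_sub {x α b : ℝ} (hx : 0 ≤ x) (hx1 : x ≤ 1) (hα : 0 ≤ α)
    (hb : b ≤ 1) (hbα : b ≤ α) : b * (1 - x ^ α) ≤ α * (1 - x) := by
  rcases le_total b 0 with hb0 | hb0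
  · nlinarith [rpow_le_one hx hx1 hα]
  · have hmax : b * max 1 α ≤ α := by
      rcases le_total α 1 with h | h
      · rw [max_eq_left h]; linarith
      · rw [max_eq_right h]; nlinarith
    nlinarith [mul_le_mul_of_nonneg_left (one_sub_rpow_le_max_mul hx hx1 hα) hb0]

end Real

theorem min_le_of_hasDerivAt_of_monotoneOn {g g' J : ℝ → ℝ} {p q c x : ℝ}
    (hg : ∀ t ∈ Icc p q, HasDerivAt g (g' t) t) (hJ : MonotoneOn J (Icc p q))
    (hpos : ∀ t ∈ Icc p q, J t ≤ c → 0 ≤ g' t) (hneg : ∀ t ∈ Icc p q, c ≤ J t → g' t ≤ 0)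
    (hx : x ∈ Icc p q) : min (g p) (g q) ≤ g x := by
  have hcont : ContinuousOn g (Icc p q) := fun t ht ↦ (hg t ht).continuousAt.continuousWithinAt
  rcases le_total (J x) c with hc | hc
  · have hsub : Icc p x ⊆ Icc p q := Icc_subset_Icc_right hx.2
    have hmono : MonotoneOn g (Icc p x) := by
      refine monotoneOn_of_hasDerivWithinAt_nonneg (f' := g') (convex_Icc p x) (hcont.mono hsub)
        (fun t ht ↦ ?_) (fun t ht ↦ ?_) <;> rw [interior_Icc] at ht
      · exact (hg t (hsub (Ioo_subset_Icc_self ht))).hasDerivWithinAt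
      · exact hpos t (hsub (Ioo_subset_Icc_self ht))
          ((hJ (hsub (Ioo_subset_Icc_self ht)) hx ht.2.le).trans hc)
    exact (min_le_left _ _).trans (hmono (left_mem_Icc.2 hx.1) (right_mem_Icc.2 hx.1) hx.1)
  · have hsub : Icc x q ⊆ Icc p q := Icc_subset_Icc_left hx.1
    have hanti : AntitoneOn g (Icc x q) := by
      refine antitoneOn_of_hasDerivWithinAt_nonpos (f' := g') (convex_Icc x q) (hcont.mono hsub)
        (fun t ht ↦ ?_) (fun t ht ↦ ?_) <;> rw [interior_Icc] at ht
      · exact (hg t (hsub (Ioo_subset_Icc_self ht))).hasDerivWithinAt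
      · exact hneg t (hsub (Ioo_subset_Icc_self ht))
          (hc.trans (hJ hx (hsub (Ioo_subset_Icc_self ht)) ht.1.le))
    exact (min_le_right _ _).trans (hanti (left_mem_Icc.2 hx.2) (right_mem_Icc.2 hx.2) hx.2)

theorem exists_pos_mul_rpow_mul_rpow_le {g : ℝ → ℝ} {α γ c₀ c₁ : ℝ} (hα : 0 ≤ α) (hγ : 0 ≤ γ)
    (hc₀ : 0 < c₀) (hc₁ : 0 < c₁) (h₀ : ∀ᶠ x in 𝓝[≥] 0, c₀ * x ^ α ≤ g x)
    (h₁ : ∀ᶠ x in 𝓝[≤] 1, c₁ * (1 - x) ^ γ ≤ g x)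
    (hmid : ∀ p q x, 0 < p → q < 1 → x ∈ Icc p q → min (g p) (g q) ≤ g x) :
    ∃ c > 0, ∀ x ∈ Icc (0 : ℝ) 1, c * x ^ α * (1 - x) ^ γ ≤ g x := by
  obtain ⟨u, hu, hu₀⟩ := mem_nhdsGE_iff_exists_Icc_subset.1 h₀
  obtain ⟨l, hl, hl₁⟩ := mem_nhdsLE_iff_exists_Icc_subset.1 h₁
  set x₀ := min u (1 / 2)
  set x₁ := max l (1 / 2)
  have hx₀ : 0 < x₀ := lt_min hu (by norm_num)
  have hx₁ : x₁ < 1 := max_lt hl (by norm_num)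
  have hg₀ : 0 < g x₀ :=
    (mul_pos hc₀ (rpow_pos_of_pos hx₀ α)).trans_le (hu₀ ⟨hx₀.le, min_le_left _ _⟩)
  have hg₁ : 0 < g x₁ :=
    (mul_pos hc₁ (rpow_pos_of_pos (sub_pos.2 hx₁) γ)).trans_le (hl₁ ⟨le_max_left _ _, hx₁.le⟩)
  refine ⟨min (min c₀ c₁) (min (g x₀) (g x₁)), by positivity, fun x hx ↦ ?_⟩
  set c := min (min c₀ c₁) (min (g x₀) (g x₁))
  have hc : 0 < c := by positivity
  have hX : 0 ≤ x ^ α := rpow_nonneg hx.1 α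
  have hY : 0 ≤ (1 - x) ^ γ := rpow_nonneg (sub_nonneg.2 hx.2) γ
  have hX1 : x ^ α ≤ 1 := rpow_le_one hx.1 hx.2 hα
  have hY1 : (1 - x) ^ γ ≤ 1 := rpow_le_one (sub_nonneg.2 hx.2) (by linarith [hx.1]) hγ
  have hcX : c * x ^ α * (1 - x) ^ γ ≤ c * x ^ α := mul_le_of_le_one_right (by positivity) hY1
  have hcY : c * x ^ α * (1 - x) ^ γ ≤ c * (1 - x) ^ γ := by
    rw [mul_right_comm]; exact mul_le_of_le_one_right (by positivity) hX1
  rcases le_or_gt x x₀ with h₀x | hx₀x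
  · calc c * x ^ α * (1 - x) ^ γ ≤ c₀ * x ^ α :=
          hcX.trans (mul_le_mul_of_nonneg_right ((min_le_left _ _).trans (min_le_left _ _)) hX)
      _ ≤ g x := hu₀ ⟨hx.1, h₀x.trans (min_le_left _ _)⟩
  rcases le_or_gt x₁ x with h₁x | hxx₁
  · calc c * x ^ α * (1 - x) ^ γ ≤ c₁ * (1 - x) ^ γ :=
          hcY.trans (mul_le_mul_of_nonneg_right ((min_le_left _ _).trans (min_le_right _ _)) hY)
      _ ≤ g x := hl₁ ⟨(le_max_left _ _).trans h₁x, hx.2⟩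
  calc c * x ^ α * (1 - x) ^ γ ≤ c := hcX.trans (mul_le_of_le_one_right hc.le hX1)
    _ ≤ min (g x₀) (g x₁) := min_le_right _ _
    _ ≤ g x := hmid x₀ x₁ x hx₀ hx₁ ⟨hx₀x.le, hxx₁.le⟩

theorem exists_pos_le_mul_rpow_mul_rpow {g : ℝ → ℝ} {α γ C₀ C₁ : ℝ} (hα : 0 ≤ α) (hγ : 0 ≤ γ)
    (hC₀ : 0 < C₀) (h₀ : ∀ x ∈ Icc 0 (1 / 2), g x ≤ C₀ * x ^ α)
    (h₁ : ∀ x ∈ Icc (1 / 2) 1, g x ≤ C₁ * (1 - x) ^ γ) :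
    ∃ C > 0, ∀ x ∈ Icc (0 : ℝ) 1, g x ≤ C * x ^ α * (1 - x) ^ γ := by
  set C := max (C₀ / (1 / 2) ^ γ) (C₁ / (1 / 2) ^ α)
  have hC : 0 < C := lt_max_of_lt_left (by positivity)
  refine ⟨C, hC, fun x hx ↦ ?_⟩
  have hX : 0 ≤ x ^ α := rpow_nonneg hx.1 α
  have hY : 0 ≤ (1 - x) ^ γ := rpow_nonneg (sub_nonneg.2 hx.2) γ
  rcases le_total x (1 / 2) with h | h
  · have hw : (1 / 2 : ℝ) ^ γ ≤ (1 - x) ^ γ := rpow_le_rpow (by norm_num) (by linarith) hγ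
    calc g x ≤ C₀ * x ^ α := h₀ x ⟨hx.1, h⟩
      _ = C₀ / (1 / 2) ^ γ * x ^ α * (1 / 2) ^ γ := by field_simp
      _ ≤ C * x ^ α * (1 - x) ^ γ :=
        mul_le_mul (mul_le_mul_of_nonneg_right (le_max_left _ _) hX) hw (by positivity)
          (by positivity)
  · have hw : (1 / 2 : ℝ) ^ α ≤ x ^ α := rpow_le_rpow (by norm_num) h hα
    calc g x ≤ C₁ * (1 - x) ^ γ := h₁ x ⟨h, hx.2⟩
      _ = C₁ / (1 / 2) ^ α * (1 / 2) ^ α * (1 - x) ^ γ := by field_simp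
      _ ≤ C * x ^ α * (1 - x) ^ γ :=
        mul_le_mul_of_nonneg_right (mul_le_mul (le_max_right _ _) hw (by positivity) hC.le) hY

/-- For `α = (1 + a + b) / 2`, the derivative of `betaGap a b` at `t ∈ (0, 1)` has the sign of
`log (2 * Beta (a + 1) (b + 1) * α) - logRatio α b t`. -/
noncomputable def logRatio (α b t : ℝ) : ℝ := (α - b) * log t + b * log (1 - t) - log (1 - t ^ α)

section LogRatio

variable {α b t : ℝ}

theorem logRatio_eq (hα : 0 < α) (ht₀ : 0 < t) (ht₁ : t < 1) :
    logRatio α b t = log (t ^ (α - b) * (1 - t) ^ b / (1 - t ^ α)) := by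
  have h1t : 0 < 1 - t := sub_pos.2 ht₁
  have h1tα : 0 < 1 - t ^ α := sub_pos.2 (rpow_lt_one ht₀.le ht₁ hα)
  rw [logRatio, log_div (by positivity) h1tα.ne', log_mul (by positivity) (by positivity),
    log_rpow ht₀, log_rpow h1t]

theorem hasDerivAt_logRatio (hα : 0 < α) (ht₀ : 0 < t) (ht₁ : t < 1) :
    HasDerivAt (logRatio α b)
      ((α - b) / t - b / (1 - t) + α * t ^ (α - 1) / (1 - t ^ α)) t := by
  have h1t : 0 < 1 - t := sub_pos.2 ht₁
  have h1tα : 0 < 1 - t ^ α := sub_pos.2 (rpow_lt_one ht₀.le ht₁ hα)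
  have h := (((hasDerivAt_log ht₀.ne').const_mul (α - b)).add
    ((((hasDerivAt_id' t).const_sub 1).log h1t.ne').const_mul b)).sub
    (((hasDerivAt_rpow_const (p := α) (Or.inl ht₀.ne')).const_sub 1).log h1tα.ne')
  exact h.congr_deriv (by ring)

theorem monotoneOn_logRatio (hα : 0 < α) (hb : b ≤ 1) (hbα : b ≤ α) :
    MonotoneOn (logRatio α b) (Ioo 0 1) := by
  refine monotoneOn_of_hasDerivWithinAt_nonneg (convex_Ioo 0 1)
    (f' := fun t ↦ (α - b) / t - b / (1 - t) + α * t ^ (α - 1) / (1 - t ^ α))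
    (fun t ht ↦ (hasDerivAt_logRatio hα ht.1 ht.2).continuousAt.continuousWithinAt)
    (fun t ht ↦ ?_) (fun t ht ↦ ?_) <;> rw [interior_Ioo] at ht
  · exact (hasDerivAt_logRatio hα ht.1 ht.2).hasDerivWithinAt
  · obtain ⟨ht₀, ht₁⟩ := ht
    have h1t : 0 < 1 - t := sub_pos.2 ht₁
    have h1tα : 0 < 1 - t ^ α := sub_pos.2 (rpow_lt_one ht₀.le ht₁ hα)
    have hkey := mul_one_sub_rpow_le_mul_one_sub ht₀.le ht₁.le hα.le hb hbα
    have hsum : (α - b) / t - b / (1 - t) + α * t ^ (α - 1) / (1 - t ^ α) =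
        (α * (1 - t) - b * (1 - t ^ α)) / (t * (1 - t) * (1 - t ^ α)) := by
      rw [rpow_sub_one ht₀.ne']
      field_simp
      ring
    rw [hsum]
    exact div_nonneg (by linarith) (by positivity)

end LogRatio

section BetaGap

variable {a b : ℝ}

theorem intervalIntegrable_one_sub_rpow (hb : -1 < b) (x y : ℝ) :
    IntervalIntegrable (fun u : ℝ ↦ (1 - u) ^ b) volume x y := by
  simpa using
    (intervalIntegral.intervalIntegrable_rpow' hb (a := 1 - x) (b := 1 - y)).comp_sub_left 1

theorem integral_one_sub_rpow (hb : -1 < b) (x : ℝ) :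
    ∫ u in x..1, (1 - u) ^ b = (1 - x) ^ (b + 1) / (b + 1) := by
  rw [intervalIntegral.integral_comp_sub_left (fun u ↦ u ^ b), integral_rpow (Or.inl hb), sub_self,
    zero_rpow (by linarith), sub_zero]

theorem intervalIntegrable_rpow_mul_one_sub_rpow_of_lt_one (ha : -1 < a) {x : ℝ} (hx : x < 1) :
    IntervalIntegrable (fun u : ℝ ↦ u ^ a * (1 - u) ^ b) volume 0 x := by
  refine (intervalIntegral.intervalIntegrable_rpow' ha).mul_continuousOn
    (ContinuousOn.rpow_const (by fun_prop) fun u hu ↦ Or.inl ?_)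
  have : u ≤ max 0 x := by simpa using hu.2
  exact (sub_pos.2 (this.trans_lt (max_lt one_pos hx))).ne'

theorem intervalIntegrable_rpow_mul_one_sub_rpow_of_pos (hb : -1 < b) {x : ℝ} (hx : 0 < x) :
    IntervalIntegrable (fun u : ℝ ↦ u ^ a * (1 - u) ^ b) volume x 1 := by
  refine (intervalIntegrable_one_sub_rpow hb x 1).continuousOn_mul
    (ContinuousOn.rpow_const (by fun_prop) fun u hu ↦ Or.inl ?_)
  have : min x 1 ≤ u := by simpa using hu.1
  exact (lt_min hx one_pos |>.trans_le this).ne'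

theorem intervalIntegrable_rpow_mul_one_sub_rpow (ha : -1 < a) (hb : -1 < b) :
    IntervalIntegrable (fun u : ℝ ↦ u ^ a * (1 - u) ^ b) volume 0 1 :=
  (intervalIntegrable_rpow_mul_one_sub_rpow_of_lt_one ha (x := 1 / 2) (by norm_num)).trans
    (intervalIntegrable_rpow_mul_one_sub_rpow_of_pos hb (by norm_num))

theorem integral_rpow_mul_one_sub_rpow (ha : -1 < a) (hb : -1 < b) :
    ∫ u in (0 : ℝ)..1, u ^ a * (1 - u) ^ b = Beta (a + 1) (b + 1) := by
  have h := ProbabilityTheory.beta_eq_betaIntegralReal (a + 1) (b + 1) (by linarith) (by linarith)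
  have hβ : Complex.betaIntegral ↑(a + 1) ↑(b + 1) =
      ((∫ u in (0 : ℝ)..1, u ^ a * (1 - u) ^ b : ℝ) : ℂ) := by
    rw [Complex.betaIntegral, ← intervalIntegral.integral_ofReal]
    refine intervalIntegral.integral_congr fun u hu ↦ ?_
    rw [uIcc_of_le zero_le_one] at hu
    simp only [Complex.ofReal_add, Complex.ofReal_one, add_sub_cancel_right, Complex.ofReal_mul]
    rw [Complex.ofReal_cpow hu.1, Complex.ofReal_cpow (sub_nonneg.2 hu.2), Complex.ofReal_sub,
      Complex.ofReal_one]
  rw [hβ, Complex.ofReal_re] at h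
  exact h.symm

theorem integral_rpow_mul_one_sub_rpow_le_rpow (ha : -1 < a) {x : ℝ} (hx₀ : 0 ≤ x)
    (hx : x ≤ 1 / 2) :
    ∫ u in (0 : ℝ)..x, u ^ a * (1 - u) ^ b ≤ x ^ (a + 1) / (a + 1) * max 1 ((1 / 2) ^ b) := by
  calc ∫ u in (0 : ℝ)..x, u ^ a * (1 - u) ^ b
      ≤ ∫ u in (0 : ℝ)..x, u ^ a * max 1 ((1 / 2) ^ b) := by
        refine intervalIntegral.integral_mono_on hx₀
          (intervalIntegrable_rpow_mul_one_sub_rpow_of_lt_one ha (by linarith))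
          ((intervalIntegral.intervalIntegrable_rpow' ha).mul_const _) fun u hu ↦ ?_
        exact mul_le_mul_of_nonneg_left (rpow_le_max_one_rpow b (by linarith [hu.2])
          (by linarith [hu.1])) (rpow_nonneg hu.1 a)
    _ = x ^ (a + 1) / (a + 1) * max 1 ((1 / 2) ^ b) := by
        rw [intervalIntegral.integral_mul_const, integral_rpow (Or.inl ha),
          zero_rpow (by linarith), sub_zero]

theorem integral_rpow_mul_one_sub_rpow_le_one_sub_rpow (hb : -1 < b) {x : ℝ} (hx : 1 / 2 ≤ x)
    (hx₁ : x ≤ 1) :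
    ∫ u in x..1, u ^ a * (1 - u) ^ b ≤ max 1 ((1 / 2) ^ a) * ((1 - x) ^ (b + 1) / (b + 1)) := by
  rw [← integral_one_sub_rpow hb, ← intervalIntegral.integral_const_mul]
  refine intervalIntegral.integral_mono_on hx₁
    (intervalIntegrable_rpow_mul_one_sub_rpow_of_pos hb (by linarith))
    ((intervalIntegrable_one_sub_rpow hb x 1).const_mul _) fun u hu ↦ ?_
  exact mul_le_mul_of_nonneg_right (rpow_le_max_one_rpow a (hx.trans hu.1) hu.2)
    (rpow_nonneg (sub_nonneg.2 hu.2) b)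

theorem mul_one_sub_rpow_le_integral_rpow_mul_one_sub_rpow (hb : -1 < b) {x : ℝ} (hx : 1 / 2 ≤ x)
    (hx₁ : x ≤ 1) :
    min 1 ((1 / 2) ^ a) * ((1 - x) ^ (b + 1) / (b + 1)) ≤ ∫ u in x..1, u ^ a * (1 - u) ^ b := by
  rw [← integral_one_sub_rpow hb, ← intervalIntegral.integral_const_mul]
  refine intervalIntegral.integral_mono_on hx₁
    ((intervalIntegrable_one_sub_rpow hb x 1).const_mul _)
    (intervalIntegrable_rpow_mul_one_sub_rpow_of_pos hb (by linarith)) fun u hu ↦ ?_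
  exact mul_le_mul_of_nonneg_right (min_one_rpow_le_rpow a (hx.trans hu.1) hu.2)
    (rpow_nonneg (sub_nonneg.2 hu.2) b)

/-- The function `G₁` of the statement. -/
noncomputable def betaGap (a b x : ℝ) : ℝ :=
  2 * Beta (a + 1) (b + 1) * x ^ ((1 + a + b) / 2) - (∫ u in (0 : ℝ)..x, u ^ a * (1 - u) ^ b) -
    Beta (a + 1) (b + 1) * x ^ (1 + a + b)

theorem rpow_one_add_add_eq_sq {x : ℝ} (hx : 0 ≤ x) (hα : 0 < 1 + a + b) :
    x ^ (1 + a + b) = (x ^ ((1 + a + b) / 2)) ^ 2 := by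
  rw [sq, ← rpow_add' hx (by linarith), add_halves]

theorem betaGap_eq_integral_sub (ha : -1 < a) (hb : -1 < b) (hα : 0 < 1 + a + b) {x : ℝ}
    (hx₀ : 0 ≤ x) (hx₁ : x ≤ 1) :
    betaGap a b x = (∫ u in x..1, u ^ a * (1 - u) ^ b) -
      Beta (a + 1) (b + 1) * (1 - x ^ ((1 + a + b) / 2)) ^ 2 := by
  have hint := intervalIntegrable_rpow_mul_one_sub_rpow ha hb
  have hx : x ∈ uIcc (0 : ℝ) 1 := by rw [uIcc_of_le zero_le_one]; exact ⟨hx₀, hx₁⟩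
  have hsplit := intervalIntegral.integral_add_adjacent_intervals
    (hint.mono_set (uIcc_subset_uIcc left_mem_uIcc hx))
    (hint.mono_set (uIcc_subset_uIcc hx right_mem_uIcc))
  rw [integral_rpow_mul_one_sub_rpow ha hb] at hsplit
  rw [betaGap, rpow_one_add_add_eq_sq hx₀ hα]
  linear_combination -hsplit

theorem betaGap_le_mul_rpow (ha : -1 < a) (hb : -1 < b) {x : ℝ} (hx₀ : 0 ≤ x) (hx₁ : x ≤ 1) :
    betaGap a b x ≤ 2 * Beta (a + 1) (b + 1) * x ^ ((1 + a + b) / 2) := by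
  have hF : 0 ≤ ∫ u in (0 : ℝ)..x, u ^ a * (1 - u) ^ b :=
    intervalIntegral.integral_nonneg hx₀ fun u hu ↦
      mul_nonneg (rpow_nonneg hu.1 a) (rpow_nonneg (by linarith [hu.2]) b)
  have hK : 0 ≤ Beta (a + 1) (b + 1) * x ^ (1 + a + b) :=
    mul_nonneg (ProbabilityTheory.beta_pos (by linarith) (by linarith)).le (rpow_nonneg hx₀ _)
  rw [betaGap]
  linarith

theorem betaGap_le_mul_one_sub_rpow (ha : -1 < a) (hb : -1 < b) (hα : 0 < 1 + a + b) {x : ℝ}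
    (hx : 1 / 2 ≤ x) (hx₁ : x ≤ 1) :
    betaGap a b x ≤ max 1 ((1 / 2) ^ a) / (b + 1) * (1 - x) ^ (b + 1) := by
  have hT := integral_rpow_mul_one_sub_rpow_le_one_sub_rpow (a := a) hb hx hx₁
  have hK : 0 ≤ Beta (a + 1) (b + 1) * (1 - x ^ ((1 + a + b) / 2)) ^ 2 :=
    mul_nonneg (ProbabilityTheory.beta_pos (by linarith) (by linarith)).le (sq_nonneg _)
  rw [betaGap_eq_integral_sub ha hb hα (by linarith) hx₁, div_mul_eq_mul_div, mul_div_assoc]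
  linarith

theorem eventually_mul_rpow_le_betaGap (ha : -1 < a) (hb : -1 < b) (hβ : 0 < 1 + a - b)
    (hα : 0 < 1 + a + b) :
    ∀ᶠ x in 𝓝[≥] 0, Beta (a + 1) (b + 1) * x ^ ((1 + a + b) / 2) ≤ betaGap a b x := by
  set K := Beta (a + 1) (b + 1) with hK_def
  set α := (1 + a + b) / 2 with hα_def
  set β := (1 + a - b) / 2 with hβ_def
  set M := max 1 ((1 / 2 : ℝ) ^ b)
  have hK : 0 < K := ProbabilityTheory.beta_pos (by linarith) (by linarith)
  have hφ : Tendsto (fun t : ℝ ↦ M / (a + 1) * t ^ β + K * t ^ α) (𝓝 0) (𝓝 0) := by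
    have h : ContinuousAt (fun t : ℝ ↦ M / (a + 1) * t ^ β + K * t ^ α) 0 :=
      ((continuousAt_rpow_const 0 β (Or.inr (by positivity))).const_mul _).add
        ((continuousAt_rpow_const 0 α (Or.inr (by positivity))).const_mul _)
    simpa [zero_rpow (by positivity : β ≠ 0), zero_rpow (by positivity : α ≠ 0)] using h.tendsto
  filter_upwards [nhdsWithin_le_nhds (hφ.eventually (eventually_lt_nhds hK)), self_mem_nhdsWithin,
    nhdsWithin_le_nhds (eventually_le_nhds (by norm_num : (0 : ℝ) < 1 / 2))] with x hφx hx₀ hx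
  have hF : ∫ u in (0 : ℝ)..x, u ^ a * (1 - u) ^ b ≤ x ^ (a + 1) / (a + 1) * M :=
    integral_rpow_mul_one_sub_rpow_le_rpow ha hx₀ hx
  have hsplit : x ^ (a + 1) = x ^ α * x ^ β := by
    rw [show a + 1 = α + β by rw [hα_def, hβ_def]; ring, rpow_add' hx₀ (by positivity)]
  rw [hsplit] at hF
  have hφx' : x ^ α * x ^ β / (a + 1) * M + K * (x ^ α) ^ 2 ≤ K * x ^ α :=
    calc _ = x ^ α * (M / (a + 1) * x ^ β + K * x ^ α) := by ring
      _ ≤ x ^ α * K := mul_le_mul_of_nonneg_left hφx.le (rpow_nonneg hx₀ α)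
      _ = K * x ^ α := mul_comm _ _
  rw [betaGap, rpow_one_add_add_eq_sq hx₀ hα, ← hK_def, ← hα_def]
  linarith

theorem exists_pos_eventually_mul_one_sub_rpow_le_betaGap (ha : -1 < a) (hb : -1 < b)
    (hb₁ : b < 1) (hα : 0 < 1 + a + b) :
    ∃ c > 0, ∀ᶠ x in 𝓝[≤] 1, c * (1 - x) ^ (b + 1) ≤ betaGap a b x := by
  set K := Beta (a + 1) (b + 1) with hK_def
  set α := (1 + a + b) / 2 with hα_def
  set c := min 1 ((1 / 2 : ℝ) ^ a) / (2 * (b + 1)) with hc_def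
  have hK : 0 < K := ProbabilityTheory.beta_pos (by linarith) (by linarith)
  have hc : 0 < c := div_pos (lt_min one_pos (by positivity)) (by linarith)
  have hψ : Tendsto (fun x : ℝ ↦ K * max 1 α ^ 2 * (1 - x) ^ (1 - b)) (𝓝 1) (𝓝 0) := by
    have h : ContinuousAt (fun x : ℝ ↦ K * max 1 α ^ 2 * (1 - x) ^ (1 - b)) 1 :=
      ((continuousAt_const.sub continuousAt_id).rpow_const (Or.inr (by linarith))).const_mul _
    simpa [zero_rpow (by linarith : 1 - b ≠ 0)] using h.tendsto
  refine ⟨c, hc, ?_⟩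
  filter_upwards [nhdsWithin_le_nhds (hψ.eventually (eventually_lt_nhds hc)), self_mem_nhdsWithin,
    nhdsWithin_le_nhds (eventually_ge_nhds (by norm_num : (1 / 2 : ℝ) < 1))] with x hψx hx₁ hx
  have hx₀ : 0 ≤ x := by linarith
  have hT := mul_one_sub_rpow_le_integral_rpow_mul_one_sub_rpow (a := a) hb hx hx₁
  have hsq : (1 - x ^ α) ^ 2 ≤ max 1 α ^ 2 * ((1 - x) ^ (1 - b) * (1 - x) ^ (b + 1)) := by
    rw [← rpow_add' (sub_nonneg.2 hx₁) (by ring_nf; norm_num),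
      show 1 - b + (b + 1) = (2 : ℝ) by ring, rpow_two, ← mul_pow]
    exact pow_le_pow_left₀ (sub_nonneg.2 (rpow_le_one hx₀ hx₁ (by positivity)))
      (one_sub_rpow_le_max_mul hx₀ hx₁ (by positivity)) 2
  have hw := rpow_nonneg (sub_nonneg.2 hx₁) (b + 1)
  have hT' : min 1 ((1 / 2) ^ a) * ((1 - x) ^ (b + 1) / (b + 1)) = 2 * c * (1 - x) ^ (b + 1) := by
    rw [hc_def]
    field_simp
  rw [betaGap_eq_integral_sub ha hb hα hx₀ hx₁, ← hK_def, ← hα_def]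
  nlinarith [mul_le_mul_of_nonneg_left hsq hK.le, mul_le_mul_of_nonneg_right hψx.le hw]

theorem hasDerivAt_betaGap (ha : -1 < a) {t : ℝ} (ht₀ : 0 < t) (ht₁ : t < 1) :
    HasDerivAt (betaGap a b) (t ^ ((1 + a + b) / 2 - 1) *
      (2 * Beta (a + 1) (b + 1) * ((1 + a + b) / 2) * (1 - t ^ ((1 + a + b) / 2)) -
        t ^ ((1 + a + b) / 2 - b) * (1 - t) ^ b)) t := by
  have hmeas : Measurable fun u : ℝ ↦ u ^ a * (1 - u) ^ b := by fun_prop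
  have hF : HasDerivAt (fun x ↦ ∫ u in (0 : ℝ)..x, u ^ a * (1 - u) ^ b) (t ^ a * (1 - t) ^ b) t :=
    intervalIntegral.integral_hasDerivAt_right
      (intervalIntegrable_rpow_mul_one_sub_rpow_of_lt_one ha ht₁)
      hmeas.stronglyMeasurable.stronglyMeasurableAtFilter
      ((continuousAt_rpow_const t a (Or.inl ht₀.ne')).mul
        ((continuousAt_const.sub continuousAt_id).rpow_const (Or.inl (sub_pos.2 ht₁).ne')))
  have h := (((hasDerivAt_rpow_const (p := (1 + a + b) / 2) (Or.inl ht₀.ne')).const_mul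
    (2 * Beta (a + 1) (b + 1))).sub hF).sub
    ((hasDerivAt_rpow_const (p := 1 + a + b) (Or.inl ht₀.ne')).const_mul (Beta (a + 1) (b + 1)))
  refine h.congr_deriv ?_
  have e₁ : t ^ ((1 + a + b) / 2 - 1) * t ^ ((1 + a + b) / 2) = t ^ (1 + a + b - 1) := by
    rw [← rpow_add ht₀]; ring_nf
  have e₂ : t ^ ((1 + a + b) / 2 - 1) * t ^ ((1 + a + b) / 2 - b) = t ^ a := by
    rw [← rpow_add ht₀]; ring_nf
  linear_combination Beta (a + 1) (b + 1) * (1 + a + b) * e₁ + (1 - t) ^ b * e₂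

theorem min_le_betaGap (ha : -1 < a) (hb : -1 < b) (hb₁ : b < 1) (hβ : 0 < 1 + a - b)
    (hα : 0 < 1 + a + b) {p q x : ℝ} (hp : 0 < p) (hq : q < 1) (hx : x ∈ Icc p q) :
    min (betaGap a b p) (betaGap a b q) ≤ betaGap a b x := by
  set K := Beta (a + 1) (b + 1) with hK_def
  set α := (1 + a + b) / 2 with hα_def
  have hα₀ : 0 < α := by positivity
  have hK : 0 < K := ProbabilityTheory.beta_pos (by linarith) (by linarith)
  have hsub : Icc p q ⊆ Ioo 0 1 := Icc_subset_Ioo hp hq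
  refine min_le_of_hasDerivAt_of_monotoneOn (J := logRatio α b) (c := log (2 * K * α))
    (fun t ht ↦ hasDerivAt_betaGap ha (hsub ht).1 (hsub ht).2)
    ((monotoneOn_logRatio hα₀ hb₁.le (by linarith)).mono hsub) (fun t ht h ↦ ?_)
    (fun t ht h ↦ ?_) hx
  all_goals
    obtain ⟨ht₀, ht₁⟩ := hsub ht
    have h1t : 0 < 1 - t := sub_pos.2 ht₁
    have h1tα : 0 < 1 - t ^ α := sub_pos.2 (rpow_lt_one ht₀.le ht₁ hα₀)
    rw [logRatio_eq hα₀ ht₀ ht₁, log_le_log_iff (by positivity) (by positivity)] at h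
    rw [← hK_def, ← hα_def]
  · rw [div_le_iff₀ h1tα] at h
    exact mul_nonneg (rpow_nonneg ht₀.le _) (by linarith)
  · rw [le_div_iff₀ h1tα] at h
    exact mul_nonpos_of_nonneg_of_nonpos (rpow_nonneg ht₀.le _) (by linarith)

end BetaGap

theorem stmt_3_general (a b : ℝ) (hb1 : |b| < 1) (hb2 : |b| < 1 + a) :
    ∃ c > (0:ℝ), ∃ C > (0:ℝ), ∀ x ∈ Set.Icc (0:ℝ) 1,
      c * x ^ ((1 + a + b) / 2) * (1 - x) ^ (1 + b) ≤
          2 * Beta (a + 1) (b + 1) * x ^ ((1 + a + b) / 2) -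
            (∫ u in (0:ℝ)..x, u ^ a * (1 - u) ^ b) -
            Beta (a + 1) (b + 1) * x ^ (1 + a + b) ∧
        2 * Beta (a + 1) (b + 1) * x ^ ((1 + a + b) / 2) -
            (∫ u in (0:ℝ)..x, u ^ a * (1 - u) ^ b) -
            Beta (a + 1) (b + 1) * x ^ (1 + a + b) ≤
          C * x ^ ((1 + a + b) / 2) * (1 - x) ^ (1 + b) := by
  obtain ⟨hb, hb₁⟩ := abs_lt.mp hb1
  obtain ⟨hab, hba⟩ := abs_lt.mp hb2
  have ha : -1 < a := by linarith
  have hα : 0 < 1 + a + b := by linarith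
  have hβ : 0 < 1 + a - b := by linarith
  have hK : 0 < Beta (a + 1) (b + 1) := ProbabilityTheory.beta_pos (by linarith) (by linarith)
  obtain ⟨c₁, hc₁, h₁⟩ := exists_pos_eventually_mul_one_sub_rpow_le_betaGap ha hb hb₁ hα
  obtain ⟨c, hc, hlow⟩ := exists_pos_mul_rpow_mul_rpow_le (by positivity) (by linarith) hK hc₁
    (eventually_mul_rpow_le_betaGap ha hb hβ hα) h₁
    fun p q x hp hq hx ↦ min_le_betaGap ha hb hb₁ hβ hα hp hq hx
  obtain ⟨C, hC, hup⟩ :=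
    exists_pos_le_mul_rpow_mul_rpow (by positivity) (by linarith) (by positivity)
    (fun x hx ↦ betaGap_le_mul_rpow ha hb hx.1 (by linarith [hx.2]))
    (fun x hx ↦ betaGap_le_mul_one_sub_rpow ha hb hα hx.1 hx.2)
  refine ⟨c, hc, C, hC, fun x hx ↦ ?_⟩
  rw [add_comm 1 b]
  exact ⟨hlow x hx, hup x hx⟩

theorem stmt_3 (a b : ℝ) (ha : -1 < a) (hb1 : |b| < 1) (hb2 : |b| < 1 + a) :
    ∃ c > (0:ℝ), ∃ C > (0:ℝ), ∀ x ∈ Set.Icc (0:ℝ) 1,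
      c * x ^ ((1 + a + b) / 2) * (1 - x) ^ (1 + b) ≤
          2 * Beta (a + 1) (b + 1) * x ^ ((1 + a + b) / 2) -
            (∫ u in (0:ℝ)..x, u ^ a * (1 - u) ^ b) -
            Beta (a + 1) (b + 1) * x ^ (1 + a + b) ∧
        2 * Beta (a + 1) (b + 1) * x ^ ((1 + a + b) / 2) -
            (∫ u in (0:ℝ)..x, u ^ a * (1 - u) ^ b) -
            Beta (a + 1) (b + 1) * x ^ (1 + a + b) ≤
          C * x ^ ((1 + a + b) / 2) * (1 - x) ^ (1 + b) :=
  stmt_3_general a b hb1 hb2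
end

section
/- Let a, b be real numbers with a > -1, -1 < b < 0 and |b| < 1 + a, and let β, ν ∈ [0,1] satisfy 0 ≤ βν < 1 + b. Then there exists a constant C > 0, depending only on a, b, β, ν, such that for all t > s > t' > s' > 0: (1/(2Β(a+1,b+1))) ∫_{s'}^{t'} u^a ((s-u)^b - (t-u)^b) du ≤ C · max((s')^a, s^a) · (t-s)^β · (t'-s')^{1+b-βν} · (t-t')^{-β(1-ν)}. (The left-hand side is nonnegative and equals the increment covariance E[(B^{a,b}_t - B^{a,b}_s)(B^{a,b}_{t'} - B^{a,b}_{s'})] of the weighted fractional Brownian motion.) -/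
open Real MeasureTheory

/-! For `0 < x < y` and `-1 ≤ b < 0` the increment `x ^ b - y ^ b` is at most `x ^ b`, at most
`|b| (y - x) x ^ (b - 1)` (Bernoulli), and at most `x ^ b (y - x) / y` (monotonicity of
`r ↦ r ^ (b + 1)`). Its geometric mean with weights `1 - β`, `β ν`, `β (1 - ν)` is
`|b| ^ (β ν) (y - x) ^ β x ^ (b - β ν) y ^ (-β (1 - ν))`. With `x = s - u`, `y = t - u`, bounding
`u ^ a` by its value at an endpoint and `(t - u) ^ (-β (1 - ν))` by its value at `u = t'`, what is
left is `∫_{s'}^{t'} (s - u) ^ (P - 1) du ≤ (t' - s') ^ P / P` for `P = 1 + b - β ν`, which is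
subadditivity of `r ↦ r ^ P`. -/

lemma Beta_pos {x y : ℝ} (hx : 0 < x) (hy : 0 < y) : 0 < Beta x y := by
  unfold Beta
  positivity

namespace Real

lemma one_add_mul_le_rpow_one_add_of_nonpos {s p : ℝ} (hs : -1 < s) (hp : p ≤ 0) :
    1 + p * s ≤ (1 + s) ^ p := by
  have hs' : 0 < 1 + s := by linarith
  calc 1 + p * s ≤ 1 + p * log (1 + s) := by
        linarith [mul_le_mul_of_nonpos_left (log_le_sub_one_of_pos hs') hp]
    _ ≤ exp (p * log (1 + s)) := by linarith [add_one_le_exp (p * log (1 + s))]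
    _ = (1 + s) ^ p := by rw [rpow_def_of_pos hs', mul_comm]

lemma le_rpow_mul_rpow_of_le_of_le {d A B p : ℝ} (hd : 0 ≤ d) (hA : d ≤ A) (hB : d ≤ B)
    (hp0 : 0 ≤ p) (hp1 : p ≤ 1) : d ≤ A ^ (1 - p) * B ^ p := calc
  d = d ^ (1 - p) * d ^ p := by rw [← rpow_add' hd (by norm_num), sub_add_cancel, rpow_one]
  _ ≤ A ^ (1 - p) * B ^ p :=
    mul_le_mul (rpow_le_rpow hd hA (by linarith)) (rpow_le_rpow hd hB hp0) (by positivity)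
      (rpow_nonneg (hd.trans hA) _)

lemma rpow_le_max_rpow_of_mem_Icc {p q u a : ℝ} (hp : 0 < p) (hu : u ∈ Set.Icc p q) :
    u ^ a ≤ max (p ^ a) (q ^ a) := by
  rcases le_total 0 a with ha | ha
  · exact le_max_of_le_right (rpow_le_rpow (hp.le.trans hu.1) hu.2 ha)
  · exact le_max_of_le_left (rpow_le_rpow_of_nonpos hp hu.1 ha)

section Increment

variable {b x y : ℝ}

lemma rpow_sub_rpow_le_neg_mul_sub_mul_rpow (hb : b ≤ 0) (hx : 0 < x) (hxy : x ≤ y) :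
    x ^ b - y ^ b ≤ -b * (y - x) * x ^ (b - 1) := by
  have hy : y ^ b = x ^ b * (1 + (y / x - 1)) ^ b := by
    rw [add_sub_cancel, ← mul_rpow hx.le (div_nonneg (hx.le.trans hxy) hx.le),
      mul_div_cancel₀ _ hx.ne']
  have := one_add_mul_le_rpow_one_add_of_nonpos (s := y / x - 1)
    (by linarith [(one_le_div hx).2 hxy]) hb
  rw [hy, rpow_sub_one hx.ne']
  have hxb := rpow_pos_of_pos hx b
  calc x ^ b - x ^ b * (1 + (y / x - 1)) ^ b ≤ x ^ b - x ^ b * (1 + b * (y / x - 1)) := by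
        gcongr
    _ = -b * (y - x) * (x ^ b / x) := by field_simp; ring

lemma rpow_sub_rpow_le_mul_sub_div (hb : -1 ≤ b) (hx : 0 < x) (hxy : x ≤ y) :
    x ^ b - y ^ b ≤ x ^ b * (y - x) / y := by
  have hy : 0 < y := hx.trans_le hxy
  have h : x ^ b * x ≤ y ^ b * y := by
    rw [← rpow_add_one hx.ne', ← rpow_add_one hy.ne']
    exact rpow_le_rpow hx.le hxy (by linarith)
  rw [le_div_iff₀ hy]
  linarith

lemma rpow_sub_rpow_le_interpolate {β ν : ℝ} (hb0 : -1 ≤ b) (hb1 : b < 0)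
    (hβ : β ∈ Set.Icc (0:ℝ) 1) (hν : ν ∈ Set.Icc (0:ℝ) 1) (hx : 0 < x) (hxy : x < y) :
    x ^ b - y ^ b ≤ |b| ^ (β * ν) * (y - x) ^ β * x ^ (b - β * ν) * y ^ (-(β * (1 - ν))) := by
  have hy : 0 < y := hx.trans hxy
  have hδ : 0 < y - x := sub_pos.2 hxy
  have hd : 0 ≤ x ^ b - y ^ b := sub_nonneg.2 (rpow_le_rpow_of_nonpos hx hxy.le hb1.le)
  have hle_rpow : x ^ b - y ^ b ≤ x ^ b := by linarith [rpow_pos_of_pos hy b]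
  have hle_tangent := rpow_sub_rpow_le_neg_mul_sub_mul_rpow hb1.le hx hxy.le
  have hle_div := rpow_sub_rpow_le_mul_sub_div hb0 hx hxy.le
  have h := le_rpow_mul_rpow_of_le_of_le hd hle_rpow
    (le_rpow_mul_rpow_of_le_of_le hd hle_div hle_tangent hν.1 hν.2) hβ.1 hβ.2
  refine h.trans_eq ?_
  rw [← abs_of_neg hb1]
  simp (disch := positivity) only [mul_rpow, div_rpow, ← rpow_mul]
  have hxe : x ^ (b - β * ν) =
      x ^ (b * (1 - β)) * x ^ (b * (1 - ν) * β) * x ^ ((b - 1) * ν * β) := by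
    rw [← rpow_add hx, ← rpow_add hx]; ring_nf
  have hδe : (y - x) ^ β = (y - x) ^ ((1 - ν) * β) * (y - x) ^ (ν * β) := by
    rw [← rpow_add hδ]; ring_nf
  rw [hxe, hδe, mul_comm β ν, show -(β * (1 - ν)) = -((1 - ν) * β) by ring, rpow_neg hy.le]
  ring

end Increment

end Real

lemma integral_sub_rpow_sub_one_le {s s' t' P : ℝ} (hs't' : s' ≤ t') (ht's : t' ≤ s)
    (hP0 : 0 < P) (hP1 : P ≤ 1) : ∫ u in s'..t', (s - u) ^ (P - 1) ≤ (t' - s') ^ P / P := by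
  rw [intervalIntegral.integral_comp_sub_left (fun v ↦ v ^ (P - 1)),
    integral_rpow (Or.inl (by linarith)), sub_add_cancel]
  gcongr
  have := rpow_add_le_add_rpow (sub_nonneg.2 ht's) (sub_nonneg.2 hs't') hP0.le hP1
  rw [sub_add_sub_cancel] at this
  linarith

lemma integral_rpow_mul_sub_rpow_le {a b β ν s' t' s t : ℝ} (hb : b < 0)
    (hβ : β ∈ Set.Icc (0:ℝ) 1) (hν : ν ∈ Set.Icc (0:ℝ) 1) (hβν : β * ν < 1 + b)
    (hs' : 0 < s') (hs't' : s' < t') (ht's : t' < s) (hst : s < t) :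
    ∫ u in s'..t', u ^ a * ((s - u) ^ b - (t - u) ^ b) ≤
      |b| ^ (β * ν) / (1 + b - β * ν) * max (s' ^ a) (s ^ a) * (t - s) ^ β *
        (t' - s') ^ (1 + b - β * ν) * (t - t') ^ (-(β * (1 - ν))) := by
  have hβν0 : 0 ≤ β * ν := mul_nonneg hβ.1 hν.1
  set P := 1 + b - β * ν
  set K := |b| ^ (β * ν) * max (s' ^ a) (s ^ a) * (t - s) ^ β * (t - t') ^ (-(β * (1 - ν)))
  have hP : 0 < P := by linarith
  have hM : 0 ≤ max (s' ^ a) (s ^ a) := le_max_of_le_left (rpow_nonneg hs'.le a)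
  have hK : 0 ≤ K := by
    have := rpow_nonneg (sub_nonneg.2 hst.le) β
    have := rpow_nonneg (sub_nonneg.2 (ht's.trans hst).le) (-(β * (1 - ν)))
    positivity
  have hpt : ∀ u ∈ Set.Icc s' t',
      u ^ a * ((s - u) ^ b - (t - u) ^ b) ≤ K * (s - u) ^ (P - 1) := by
    intro u hu
    have hsu : 0 < s - u := by linarith [hu.2]
    have hua : u ^ a ≤ max (s' ^ a) (s ^ a) :=
      rpow_le_max_rpow_of_mem_Icc hs' ⟨hu.1, hu.2.trans ht's.le⟩
    have hinc := rpow_sub_rpow_le_interpolate (by linarith) hb hβ hν hsu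
      (show s - u < t - u by linarith)
    have htu : (t - u) ^ (-(β * (1 - ν))) ≤ (t - t') ^ (-(β * (1 - ν))) :=
      rpow_le_rpow_of_nonpos (by linarith) (by linarith [hu.2])
        (neg_nonpos.2 (mul_nonneg hβ.1 (by linarith [hν.2])))
    rw [sub_sub_sub_cancel_right, show b - β * ν = P - 1 by ring] at hinc
    calc u ^ a * ((s - u) ^ b - (t - u) ^ b)
        ≤ max (s' ^ a) (s ^ a) * (|b| ^ (β * ν) * (t - s) ^ β * (s - u) ^ (P - 1) *
            (t - t') ^ (-(β * (1 - ν)))) :=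
          mul_le_mul hua (hinc.trans (by gcongr)) (sub_nonneg.2 (rpow_le_rpow_of_nonpos hsu
            (by linarith) hb.le)) hM
      _ = K * (s - u) ^ (P - 1) := by ring
  have hint : IntervalIntegrable (fun u ↦ u ^ a * ((s - u) ^ b - (t - u) ^ b)) volume s' t' ∧
      IntervalIntegrable (fun u ↦ K * (s - u) ^ (P - 1)) volume s' t' := by
    constructor <;>
    · refine ContinuousOn.intervalIntegrable fun u hu ↦ ContinuousAt.continuousWithinAt ?_
      rw [Set.uIcc_of_le hs't'.le] at hu
      fun_prop (disch := exact Or.inl (ne_of_gt (by linarith [hu.1, hu.2])))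
  calc ∫ u in s'..t', u ^ a * ((s - u) ^ b - (t - u) ^ b)
      ≤ ∫ u in s'..t', K * (s - u) ^ (P - 1) :=
        intervalIntegral.integral_mono_on hs't'.le hint.1 hint.2 hpt
    _ = K * ∫ u in s'..t', (s - u) ^ (P - 1) := intervalIntegral.integral_const_mul _ _
    _ ≤ K * ((t' - s') ^ P / P) := by
        gcongr
        exact integral_sub_rpow_sub_one_le hs't'.le ht's.le hP (by linarith)
    _ = _ := by ring

theorem stmt_4_general (a b β ν : ℝ) (ha : -1 < a) (hb0 : -1 < b) (hb1 : b < 0)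
    (hβ : β ∈ Set.Icc (0:ℝ) 1) (hν : ν ∈ Set.Icc (0:ℝ) 1) (hβν : β * ν < 1 + b) :
    ∃ C > (0:ℝ), ∀ t s t' s' : ℝ, 0 < s' → s' < t' → t' < s → s < t →
      (1 / (2 * Beta (a + 1) (b + 1))) *
          (∫ u in s'..t', u ^ a * ((s - u) ^ b - (t - u) ^ b)) ≤
        C * max (s' ^ a) (s ^ a) * (t - s) ^ β * (t' - s') ^ (1 + b - β * ν) *
          (t - t') ^ (-(β * (1 - ν))) := by
  have hB : 0 < Beta (a + 1) (b + 1) := Beta_pos (by linarith) (by linarith)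
  have hP : 0 < 1 + b - β * ν := by linarith
  have hb : 0 < |b| := abs_pos.2 hb1.ne
  refine ⟨1 / (2 * Beta (a + 1) (b + 1)) * (|b| ^ (β * ν) / (1 + b - β * ν)), by positivity, ?_⟩
  intro t s t' s' hs' hs't' ht's hst
  calc _ ≤ 1 / (2 * Beta (a + 1) (b + 1)) * (|b| ^ (β * ν) / (1 + b - β * ν) *
          max (s' ^ a) (s ^ a) * (t - s) ^ β * (t' - s') ^ (1 + b - β * ν) *
          (t - t') ^ (-(β * (1 - ν)))) := by
        gcongr
        exact integral_rpow_mul_sub_rpow_le hb1 hβ hν hβν hs' hs't' ht's hst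
    _ = _ := by ring

theorem stmt_4 (a b β ν : ℝ) (ha : -1 < a) (hb0 : -1 < b) (hb1 : b < 0) (hb2 : |b| < 1 + a)
    (hβ : β ∈ Set.Icc (0:ℝ) 1) (hν : ν ∈ Set.Icc (0:ℝ) 1) (hβν : β * ν < 1 + b) :
    ∃ C > (0:ℝ), ∀ t s t' s' : ℝ, 0 < s' → s' < t' → t' < s → s < t →
      (1 / (2 * Beta (a + 1) (b + 1))) *
          (∫ u in s'..t', u ^ a * ((s - u) ^ b - (t - u) ^ b)) ≤
        C * max (s' ^ a) (s ^ a) * (t - s) ^ β * (t' - s') ^ (1 + b - β * ν) *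
          (t - t') ^ (-(β * (1 - ν))) :=
  stmt_4_general a b β ν ha hb0 hb1 hβ hν hβν
end

section
/- Let a, b be real numbers with a > -1, -1 < b < 0 and |b| < 1 + a. Then there exists a constant C > 0, depending only on a and b, such that for all t > s > r > 0: 0 ≤ R_{a,b}(t,s) - R_{a,b}(t,r) ≤ C · (s-r)^{1+b} · s^a. (The middle quantity equals E[B^{a,b}_t (B^{a,b}_s - B^{a,b}_r)].) -/
open Real MeasureTheory intervalIntegral

lemma wf_rpow_subadd {x y p : ℝ} (hx : 0 ≤ x) (hy : 0 ≤ y) (hp : 0 ≤ p) (hp1 : p ≤ 1) :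
    (x + y) ^ p ≤ x ^ p + y ^ p := by
  have h := NNReal.rpow_add_le_add_rpow x.toNNReal y.toNNReal hp hp1
  have h2 := NNReal.coe_le_coe.mpr h
  simpa [NNReal.coe_rpow, Real.coe_toNNReal, hx, hy, Real.toNNReal_add hx hy] using h2

lemma wf_betaInt {a b s : ℝ} (ha : -1 < a) (hb : -1 < b) (hs : 0 < s) :
    IntervalIntegrable (fun u => u ^ a * (s - u) ^ b) volume 0 s := by
  have h1 : IntervalIntegrable (fun u => u ^ a * (s - u) ^ b) volume 0 (s / 2) := by
    apply (intervalIntegral.intervalIntegrable_rpow' ha).mul_continuousOn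
    apply ContinuousOn.rpow_const (by fun_prop)
    intro x hx
    rw [Set.uIcc_of_le (by linarith)] at hx
    left; intro h; nlinarith [hx.2]
  have h2 : IntervalIntegrable (fun u => u ^ a * (s - u) ^ b) volume (s / 2) s := by
    have base : IntervalIntegrable (fun x : ℝ => x ^ b) volume 0 (s / 2) :=
      intervalIntegral.intervalIntegrable_rpow' hb
    have base2 := (base.comp_sub_left s).symm
    rw [show s - 0 = s by ring, show s - s / 2 = s / 2 by ring] at base2
    apply base2.continuousOn_mul
    apply ContinuousOn.rpow_const (by fun_prop)
    intro x hx
    rw [Set.uIcc_of_le (by linarith)] at hx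
    left; intro h; nlinarith [hx.1]
  exact h1.trans h2

lemma wf_scaling {a b s : ℝ} (hs : 0 < s) :
    (∫ u in (0:ℝ)..s, u ^ a * (s - u) ^ b)
      = s ^ (a + b + 1) * ∫ v in (0:ℝ)..1, v ^ a * (1 - v) ^ b := by
  have h := intervalIntegral.integral_comp_mul_left
    (fun u => u ^ a * (s - u) ^ b) (a := 0) (b := 1) (c := s) hs.ne'
  rw [mul_zero, mul_one] at h
  have hcong : ∫ x in (0:ℝ)..1, (s * x) ^ a * (s - s * x) ^ b
      = ∫ x in (0:ℝ)..1, s ^ (a + b) * (x ^ a * (1 - x) ^ b) := by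
    apply intervalIntegral.integral_congr
    intro x hx
    rw [Set.uIcc_of_le zero_le_one] at hx
    have h1 : s - s * x = s * (1 - x) := by ring
    dsimp only
    rw [h1, Real.mul_rpow hs.le hx.1, Real.mul_rpow hs.le (by linarith [hx.2]),
      Real.rpow_add hs]
    ring
  rw [hcong, intervalIntegral.integral_const_mul] at h
  have h3 := congrArg (fun z => s * z) h
  simp only [smul_eq_mul] at h3
  have h2 : s * (s⁻¹ * ∫ x in (0:ℝ)..s, x ^ a * (s - x) ^ b)
      = ∫ x in (0:ℝ)..s, x ^ a * (s - x) ^ b := by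
    field_simp
  rw [h2] at h3
  have h4 : s ^ (a + b + 1) = s * s ^ (a + b) := by
    rw [show a + b + 1 = 1 + (a + b) by ring, Real.rpow_add hs, Real.rpow_one]
  rw [← h3, h4]; ring

lemma wf_contInt {a b s t : ℝ} (ha : -1 < a) (hs : 0 < s) (hst : s < t) :
    IntervalIntegrable (fun u => u ^ a * (t - u) ^ b) volume 0 s := by
  apply (intervalIntegral.intervalIntegrable_rpow' ha).mul_continuousOn
  apply ContinuousOn.rpow_const (by fun_prop)
  intro x hx
  rw [Set.uIcc_of_le hs.le] at hx
  left; intro h; nlinarith [hx.2]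

theorem stmt_6 (a b : ℝ) (ha : -1 < a) (hb0 : -1 < b) (hb1 : b < 0) (hb2 : |b| < 1 + a) :
    ∃ C > (0:ℝ), ∀ t s r : ℝ, 0 < r → r < s → s < t →
      0 ≤ R a b t s - R a b t r ∧
        R a b t s - R a b t r ≤ C * (s - r) ^ (1 + b) * s ^ a := by
  have hk0 : 0 < a + b + 1 := by
    have := (abs_lt.mp hb2).1; linarith
  have hp0 : (0:ℝ) < 1 + b := by linarith
  have hBeta : 0 < Beta (a + 1) (b + 1) := by
    unfold Beta
    apply div_pos (mul_pos (Real.Gamma_pos_of_pos (by linarith))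
      (Real.Gamma_pos_of_pos (by linarith)))
    exact Real.Gamma_pos_of_pos (by linarith)
  set c := 1 / (2 * Beta (a + 1) (b + 1)) with hc_def
  have hc : 0 < c := by
    rw [hc_def]; exact div_pos one_pos (by linarith)
  set J := ∫ v in (0:ℝ)..1, v ^ a * (1 - v) ^ b with hJ_def
  have hJ : 0 ≤ J := by
    apply intervalIntegral.integral_nonneg zero_le_one
    intro u hu
    exact mul_nonneg (Real.rpow_nonneg hu.1 a) (Real.rpow_nonneg (by linarith [hu.2]) b)
  set K := (2:ℝ) ^ |a| with hK_def
  have hK1 : (1:ℝ) ≤ K := by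
    rw [hK_def, show (1:ℝ) = (2:ℝ) ^ (0:ℝ) by simp]
    exact Real.rpow_le_rpow_of_exponent_le one_le_two (abs_nonneg a)
  have hK0 : (0:ℝ) < K := lt_of_lt_of_le one_pos hK1
  have h2p : (0:ℝ) < 2 ^ (1 + b) := Real.rpow_pos_of_pos two_pos _
  set C1 := J * 2 ^ (1 + b) + K / (1 + b) with hC1_def
  set C2 := J * 2 ^ (1 + b) + J * (a + b + 1) * K / (1 + b) with hC2_def
  have hC1 : 0 ≤ C1 := by
    rw [hC1_def]
    exact add_nonneg (mul_nonneg hJ h2p.le) (div_nonneg hK0.le hp0.le)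
  have hC2 : 0 ≤ C2 := by
    rw [hC2_def]
    have h1 := mul_nonneg hJ h2p.le
    have h2 : 0 ≤ J * (a + b + 1) * K / (1 + b) :=
      div_nonneg (mul_nonneg (mul_nonneg hJ hk0.le) hK0.le) hp0.le
    linarith
  refine ⟨c * (C1 + C2) + 1, by linarith [mul_nonneg hc.le (add_nonneg hC1 hC2)], ?_⟩
  intro t s r hr hrs hst
  have hs : 0 < s := hr.trans hrs
  have ht : 0 < t := hs.trans hst
  have hrt : r < t := hrs.trans hst
  -- integrability
  have hIts := wf_contInt (b := b) ha hs hst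
  have hIss := wf_betaInt ha hb0 hs
  have hItr : IntervalIntegrable (fun u => u ^ a * (t - u) ^ b) volume 0 r :=
    hIts.mono_set (by
      rw [Set.uIcc_of_le hr.le, Set.uIcc_of_le hs.le]
      exact Set.Icc_subset_Icc_right hrs.le)
  have hIrr := wf_betaInt ha hb0 hr
  have hIts' : IntervalIntegrable (fun u => u ^ a * (t - u) ^ b) volume r s :=
    hIts.mono_set (by
      rw [Set.uIcc_of_le hrs.le, Set.uIcc_of_le hs.le]
      exact Set.Icc_subset_Icc_left hr.le)
  have hIss' : IntervalIntegrable (fun u => u ^ a * (s - u) ^ b) volume r s :=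
    hIss.mono_set (by
      rw [Set.uIcc_of_le hrs.le, Set.uIcc_of_le hs.le]
      exact Set.Icc_subset_Icc_left hr.le)
  have hIs0r : IntervalIntegrable (fun u => u ^ a * (s - u) ^ b) volume 0 r :=
    hIss.mono_set (by
      rw [Set.uIcc_of_le hr.le, Set.uIcc_of_le hs.le]
      exact Set.Icc_subset_Icc_right hrs.le)
  -- expressions for R
  have hRs : R a b t s
      = c * ((∫ u in (0:ℝ)..s, u ^ a * (t - u) ^ b) + s ^ (a + b + 1) * J) := by
    rw [R, min_eq_right hst.le, ← hc_def, ← wf_scaling hs,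
      ← intervalIntegral.integral_add hIts hIss]
    congr 1
    apply intervalIntegral.integral_congr
    intro x _; dsimp only; ring
  have hRr : R a b t r
      = c * ((∫ u in (0:ℝ)..r, u ^ a * (t - u) ^ b) + r ^ (a + b + 1) * J) := by
    rw [R, min_eq_right hrt.le, ← hc_def, ← wf_scaling hr,
      ← intervalIntegral.integral_add hItr hIrr]
    congr 1
    apply intervalIntegral.integral_congr
    intro x _; dsimp only; ring
  have hsub := intervalIntegral.integral_interval_sub_left hIts hItr
  set I1 := ∫ u in r..s, u ^ a * (t - u) ^ b with hI1_def
  have hD : R a b t s - R a b t r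
      = c * (I1 + J * (s ^ (a + b + 1) - r ^ (a + b + 1))) := by
    rw [hRs, hRr, ← hsub]; ring
  have hI1nn : 0 ≤ I1 := by
    apply intervalIntegral.integral_nonneg hrs.le
    intro u hu
    exact mul_nonneg (Real.rpow_nonneg (le_trans hr.le hu.1) a)
      (Real.rpow_nonneg (by linarith [hu.2]) b)
  have hκmono : r ^ (a + b + 1) ≤ s ^ (a + b + 1) :=
    Real.rpow_le_rpow hr.le hrs.le hk0.le
  constructor
  · rw [hD]
    exact mul_nonneg hc.le (add_nonneg hI1nn (mul_nonneg hJ (by linarith)))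
  -- upper bound
  set X := (s - r) ^ (1 + b) * s ^ a with hX_def
  have hXnn : 0 ≤ X :=
    mul_nonneg (Real.rpow_nonneg (by linarith) _) (Real.rpow_nonneg hs.le _)
  set I2 := ∫ u in r..s, u ^ a * (s - u) ^ b with hI2_def
  have hI12 : I1 ≤ I2 := by
    apply intervalIntegral.integral_mono_ae_restrict hrs.le hIts' hIss'
    have h0 : ∀ᵐ u ∂(volume.restrict (Set.Icc r s)), u ∈ Set.Icc r s :=
      ae_restrict_mem measurableSet_Icc
    have h1 : ∀ᵐ (u : ℝ), u ≠ s := by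
      refine (MeasureTheory.ae_iff).mpr ?_
      simp only [ne_eq, not_not]
      rw [Set.setOf_eq_eq_singleton]
      exact Real.volume_singleton
    filter_upwards [h0, ae_restrict_of_ae h1] with u hu hus
    have hu2 : u < s := lt_of_le_of_ne hu.2 hus
    apply mul_le_mul_of_nonneg_left _ (Real.rpow_nonneg (le_trans hr.le hu.1) a)
    exact Real.rpow_le_rpow_of_nonpos (by linarith) (by linarith) hb1.le
  have key : I2 ≤ C1 * X ∧ J * (s ^ (a + b + 1) - r ^ (a + b + 1)) ≤ C2 * X := by
    have hC1X : C1 * X = J * 2 ^ (1 + b) * X + K / (1 + b) * X := by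
      rw [hC1_def]; ring
    have hC2X : C2 * X = J * 2 ^ (1 + b) * X + J * (a + b + 1) * K / (1 + b) * X := by
      rw [hC2_def]; ring
    have hJ2X : 0 ≤ J * 2 ^ (1 + b) * X := by
      exact mul_nonneg (mul_nonneg hJ h2p.le) hXnn
    rcases le_or_gt s (2 * r) with hcase | hcase
    · -- case B : s ≤ 2r
      have hKb : ∀ u ∈ Set.Icc r s, u ^ a ≤ K * s ^ a := by
        intro u hu
        rcases le_or_gt 0 a with haa | haa
        · calc u ^ a ≤ s ^ a := Real.rpow_le_rpow (le_trans hr.le hu.1) hu.2 haa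
            _ ≤ K * s ^ a := le_mul_of_one_le_left (Real.rpow_nonneg hs.le a) hK1
        · have h1 : u ^ a ≤ (s / 2) ^ a :=
            Real.rpow_le_rpow_of_nonpos (by linarith) (by linarith [hu.1]) haa.le
          have h2 : (s / 2) ^ a = s ^ a * (2:ℝ) ^ (-a) := by
            rw [div_eq_mul_inv, Real.mul_rpow hs.le (by positivity),
              Real.inv_rpow (by norm_num), ← Real.rpow_neg (by norm_num)]
          have h3 : (2:ℝ) ^ (-a) = K := by rw [hK_def, abs_of_neg haa]
          rw [h2, h3] at h1
          linarith [h1, mul_comm (s ^ a) K]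
      -- bound I2
      have hIcb : IntervalIntegrable (fun u => K * s ^ a * (s - u) ^ b) volume r s := by
        have base : IntervalIntegrable (fun x : ℝ => x ^ b) volume 0 (s - r) :=
          intervalIntegral.intervalIntegrable_rpow' hb0
        have b2 := (base.comp_sub_left s).symm
        rw [show s - 0 = s by ring, show s - (s - r) = r by ring] at b2
        exact b2.const_mul _
      have step1 : I2 ≤ ∫ u in r..s, K * s ^ a * (s - u) ^ b := by
        apply intervalIntegral.integral_mono_on hrs.le hIss' hIcb
        intro u hu
        exact mul_le_mul_of_nonneg_right (hKb u hu)
          (Real.rpow_nonneg (by linarith [hu.2]) b)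
      have step2 : ∫ u in r..s, K * s ^ a * (s - u) ^ b
          = K * s ^ a * ((s - r) ^ (1 + b) / (1 + b)) := by
        rw [intervalIntegral.integral_const_mul]
        congr 1
        rw [intervalIntegral.integral_comp_sub_left (fun v => v ^ b) s,
          integral_rpow (Or.inl hb0), show s - s = (0:ℝ) by ring,
          Real.zero_rpow (by linarith : (0:ℝ) < b + 1).ne', show 1 + b = b + 1 by ring]
        ring
      have hI2b : I2 ≤ K / (1 + b) * X := by
        rw [hX_def]
        calc I2 ≤ K * s ^ a * ((s - r) ^ (1 + b) / (1 + b)) := step1.trans_eq step2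
          _ = K / (1 + b) * ((s - r) ^ (1 + b) * s ^ a) := by ring
      -- bound the second term
      have hirpow : ∫ u in r..s, u ^ (a + b)
          = (s ^ (a + b + 1) - r ^ (a + b + 1)) / (a + b + 1) := by
        rw [integral_rpow (Or.inl (by linarith : (-1:ℝ) < a + b))]
      have hstep : (∫ u in r..s, u ^ (a + b)) ≤ ∫ u in r..s, K * s ^ a * u ^ b := by
        apply intervalIntegral.integral_mono_on hrs.le
          (intervalIntegral.intervalIntegrable_rpow' (by linarith))
          ((intervalIntegral.intervalIntegrable_rpow' hb0).const_mul _)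
        intro u hu
        have hu0 : 0 < u := lt_of_lt_of_le hr hu.1
        rw [Real.rpow_add hu0]
        exact mul_le_mul_of_nonneg_right (hKb u hu) (Real.rpow_nonneg hu0.le b)
      have hub : ∫ u in r..s, K * s ^ a * u ^ b
          = K * s ^ a * ((s ^ (b + 1) - r ^ (b + 1)) / (b + 1)) := by
        rw [intervalIntegral.integral_const_mul, integral_rpow (Or.inl hb0)]
      have hsub2 : s ^ (b + 1) - r ^ (b + 1) ≤ (s - r) ^ (b + 1) := by
        have h5 := wf_rpow_subadd (x := s - r) (y := r) (p := b + 1) (by linarith) hr.le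
          (by linarith) (by linarith)
        rw [show s - r + r = s by ring] at h5; linarith
      have hχ : s ^ (a + b + 1) - r ^ (a + b + 1)
          ≤ (a + b + 1) * (K * s ^ a * ((s - r) ^ (b + 1) / (b + 1))) := by
        have h5 : (s ^ (a + b + 1) - r ^ (a + b + 1)) / (a + b + 1)
            ≤ K * s ^ a * ((s ^ (b + 1) - r ^ (b + 1)) / (b + 1)) := by
          rw [← hirpow, ← hub]; exact hstep
        have h6 : K * s ^ a * ((s ^ (b + 1) - r ^ (b + 1)) / (b + 1))
            ≤ K * s ^ a * ((s - r) ^ (b + 1) / (b + 1)) := by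
          apply mul_le_mul_of_nonneg_left _ (mul_nonneg hK0.le (Real.rpow_nonneg hs.le a))
          exact (div_le_div_iff_of_pos_right (by linarith)).mpr hsub2
        calc s ^ (a + b + 1) - r ^ (a + b + 1)
            = (a + b + 1) * ((s ^ (a + b + 1) - r ^ (a + b + 1)) / (a + b + 1)) := by
              field_simp
          _ ≤ (a + b + 1) * (K * s ^ a * ((s - r) ^ (b + 1) / (b + 1))) :=
              mul_le_mul_of_nonneg_left (h5.trans h6) hk0.le
      have hT2 : J * (s ^ (a + b + 1) - r ^ (a + b + 1))
          ≤ J * (a + b + 1) * K / (1 + b) * X := by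
        calc J * (s ^ (a + b + 1) - r ^ (a + b + 1))
            ≤ J * ((a + b + 1) * (K * s ^ a * ((s - r) ^ (b + 1) / (b + 1)))) :=
              mul_le_mul_of_nonneg_left hχ hJ
          _ = J * (a + b + 1) * K / (1 + b) * X := by
              rw [hX_def, show b + 1 = 1 + b by ring]; ring
      constructor
      · rw [hC1X]; linarith
      · rw [hC2X]; linarith
    · -- case A : 2r < s
      have hsle : s ≤ 2 * (s - r) := by linarith
      have hsp : s ^ (1 + b) ≤ 2 ^ (1 + b) * (s - r) ^ (1 + b) := by
        calc s ^ (1 + b) ≤ (2 * (s - r)) ^ (1 + b) :=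
            Real.rpow_le_rpow hs.le hsle hp0.le
          _ = 2 ^ (1 + b) * (s - r) ^ (1 + b) :=
            Real.mul_rpow (by norm_num) (by linarith)
      have hsk : s ^ (a + b + 1) ≤ 2 ^ (1 + b) * X := by
        rw [hX_def, show a + b + 1 = (1 + b) + a by ring, Real.rpow_add hs]
        calc s ^ (1 + b) * s ^ a ≤ (2 ^ (1 + b) * (s - r) ^ (1 + b)) * s ^ a :=
            mul_le_mul_of_nonneg_right hsp (Real.rpow_nonneg hs.le a)
          _ = 2 ^ (1 + b) * ((s - r) ^ (1 + b) * s ^ a) := by ring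
      have hfull : I2 ≤ s ^ (a + b + 1) * J := by
        have hsplit := intervalIntegral.integral_add_adjacent_intervals hIs0r hIss'
        have h0r : 0 ≤ ∫ u in (0:ℝ)..r, u ^ a * (s - u) ^ b := by
          apply intervalIntegral.integral_nonneg hr.le
          intro u hu
          exact mul_nonneg (Real.rpow_nonneg hu.1 a)
            (Real.rpow_nonneg (by linarith [hu.2]) b)
        have hsc := wf_scaling (a := a) (b := b) hs
        rw [← hJ_def] at hsc
        rw [← hI2_def] at hsplit
        linarith [hsplit, hsc]
      have hI2A : I2 ≤ J * 2 ^ (1 + b) * X := by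
        calc I2 ≤ s ^ (a + b + 1) * J := hfull
          _ ≤ (2 ^ (1 + b) * X) * J := mul_le_mul_of_nonneg_right hsk hJ
          _ = J * 2 ^ (1 + b) * X := by ring
      have hrknn : 0 ≤ r ^ (a + b + 1) := Real.rpow_nonneg hr.le _
      have hT2 : J * (s ^ (a + b + 1) - r ^ (a + b + 1)) ≤ J * 2 ^ (1 + b) * X := by
        calc J * (s ^ (a + b + 1) - r ^ (a + b + 1)) ≤ J * s ^ (a + b + 1) :=
            mul_le_mul_of_nonneg_left (by linarith) hJ
          _ ≤ J * (2 ^ (1 + b) * X) := mul_le_mul_of_nonneg_left hsk hJ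
          _ = J * 2 ^ (1 + b) * X := by ring
      have hKpX : 0 ≤ K / (1 + b) * X :=
        mul_nonneg (div_nonneg hK0.le hp0.le) hXnn
      have hJKX : 0 ≤ J * (a + b + 1) * K / (1 + b) * X :=
        mul_nonneg (div_nonneg (mul_nonneg (mul_nonneg hJ hk0.le) hK0.le) hp0.le) hXnn
      constructor
      · rw [hC1X]; linarith
      · rw [hC2X]; linarith
  rw [hD]
  have hfin : (c * (C1 + C2) + 1) * (s - r) ^ (1 + b) * s ^ a
      = (c * (C1 + C2) + 1) * X := by rw [hX_def]; ring
  rw [hfin]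
  calc c * (I1 + J * (s ^ (a + b + 1) - r ^ (a + b + 1)))
      ≤ c * (C1 * X + C2 * X) := by
        apply mul_le_mul_of_nonneg_left _ hc.le
        linarith [hI12, key.1, key.2]
    _ = (c * (C1 + C2)) * X := by ring
    _ ≤ (c * (C1 + C2) + 1) * X := by
        have h9 : (c * (C1 + C2) + 1) * X = c * (C1 + C2) * X + X := by ring
        linarith
end

section
/- Let a, b be real numbers with a > -1, -1 < b < 0 and |b| < 1 + a. Then there exists a constant C > 0, depending only on a and b, such that for all t > s > 0: |R_{a,b}(s,t) - s^{1+a+b}| ≤ C · (t-s)^{1+b} · s^a. (The quantity inside the absolute value equals E[B^{a,b}_s (B^{a,b}_t - B^{a,b}_s)].) -/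
open Real MeasureTheory

lemma my_bernoulli_neg {r p : ℝ} (hr : 0 ≤ r) (hp0 : -1 ≤ p) (hp1 : p ≤ 0) :
    1 + p * r ≤ (1 + r) ^ p := by
  have h1r : (0:ℝ) < 1 + r := by linarith
  rcases le_or_gt (1 + p * r) 0 with h | h
  · exact le_trans h (Real.rpow_pos_of_pos h1r p).le
  · have hq : (1 + r) ^ (-p) ≤ 1 + (-p) * r :=
      rpow_one_add_le_one_add_mul_self (by linarith) (by linarith) (by linarith)
    have hqpos : (0:ℝ) < (1 + r) ^ (-p) := Real.rpow_pos_of_pos h1r _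
    have key : (1 + p * r) * (1 + r) ^ (-p) ≤ 1 := by
      calc (1 + p * r) * (1 + r) ^ (-p) ≤ (1 + p * r) * (1 + (-p) * r) :=
            mul_le_mul_of_nonneg_left hq h.le
        _ = 1 - (p*r)^2 := by ring
        _ ≤ 1 := by nlinarith [sq_nonneg (p*r)]
    have hrw : (1 + r) ^ p = 1 / (1 + r) ^ (-p) := by
      rw [Real.rpow_neg h1r.le p, one_div, inv_inv]
    rw [hrw, le_div_iff₀ hqpos]
    exact key

lemma my_integral_mono_Ico {f g : ℝ → ℝ} {a b : ℝ} (hab : a ≤ b)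
    (hf : IntervalIntegrable f volume a b) (hg : IntervalIntegrable g volume a b)
    (h : ∀ u ∈ Set.Ico a b, f u ≤ g u) :
    (∫ u in a..b, f u) ≤ ∫ u in a..b, g u := by
  apply intervalIntegral.integral_mono_ae_restrict hab hf hg
  have h1 : ∀ᵐ u ∂(volume.restrict (Set.Icc a b)), u ∈ Set.Icc a b :=
    ae_restrict_mem measurableSet_Icc
  have h2 : ∀ᵐ (u : ℝ), u ≠ b := by
    rw [Filter.eventually_iff, MeasureTheory.mem_ae_iff]
    have he : {u : ℝ | u ≠ b}ᶜ = {b} := by ext; simp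
    rw [he]; exact measure_singleton b
  filter_upwards [h1, ae_restrict_of_ae h2] with u hu hub
  exact h u ⟨hu.1, lt_of_le_of_ne hu.2 hub⟩

lemma my_intInt_sub {b : ℝ} (hb : -1 < b) {p q x : ℝ} :
    IntervalIntegrable (fun u => (x - u) ^ b) volume p q := by
  have hbase : IntervalIntegrable (fun v : ℝ => v ^ b) volume (x - q) (x - p) :=
    intervalIntegral.intervalIntegrable_rpow' hb
  have hcomp := hbase.comp_sub_left x
  have h3 : x - (x - p) = p := by ring
  have h4 : x - (x - q) = q := by ring
  rw [h3, h4] at hcomp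
  exact hcomp.symm

lemma my_intInt {a b : ℝ} (ha : -1 < a) (hb : -1 < b) {s x : ℝ} (hs : 0 < s) (hx : s ≤ x) :
    IntervalIntegrable (fun u => u ^ a * (x - u) ^ b) volume 0 s := by
  have h1 : IntervalIntegrable (fun u => u ^ a * (x - u) ^ b) volume 0 (s/2) := by
    apply IntervalIntegrable.mul_continuousOn (intervalIntegral.intervalIntegrable_rpow' ha)
    apply ContinuousOn.rpow_const
    · exact (continuous_const.sub continuous_id).continuousOn
    · intro u hu
      rw [Set.uIcc_of_le (by linarith)] at hu
      left
      intro hc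
      nlinarith [hu.1, hu.2]
  have h2 : IntervalIntegrable (fun u => u ^ a * (x - u) ^ b) volume (s/2) s := by
    apply IntervalIntegrable.continuousOn_mul (my_intInt_sub hb)
    apply ContinuousOn.rpow_const
    · exact continuousOn_id
    · intro u hu
      rw [Set.uIcc_of_le (by linarith)] at hu
      left; intro hc; nlinarith [hu.1, hu.2]
  exact h1.trans h2

lemma my_beta_int {a b : ℝ} (ha : -1 < a) (hb : -1 < b) :
    (∫ u in (0:ℝ)..1, u ^ a * (1 - u) ^ b) = Beta (a+1) (b+1) := by
  have hG := Complex.Gamma_mul_Gamma_eq_betaIntegral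
    (s := ((a:ℂ)+1)) (t := ((b:ℂ)+1)) (by simp; linarith) (by simp; linarith)
  have hI : Complex.betaIntegral ((a:ℂ)+1) ((b:ℂ)+1)
      = ((∫ u in (0:ℝ)..1, u ^ a * (1 - u) ^ b : ℝ) : ℂ) := by
    rw [Complex.betaIntegral, ← intervalIntegral.integral_ofReal]
    apply intervalIntegral.integral_congr
    intro x hx
    rw [Set.uIcc_of_le (by norm_num : (0:ℝ) ≤ 1)] at hx
    have hx0 : (0:ℝ) ≤ x := hx.1
    have hx1 : (0:ℝ) ≤ 1 - x := by linarith [hx.2]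
    simp only [Complex.ofReal_mul]
    rw [Complex.ofReal_cpow hx0, Complex.ofReal_cpow hx1]
    push_cast
    ring_nf
  rw [hI] at hG
  have hsum : (a:ℂ) + 1 + ((b:ℂ) + 1) = ((a + 1 + (b + 1) : ℝ) : ℂ) := by push_cast; ring
  rw [hsum] at hG
  have hG2 : ((Real.Gamma (a+1) * Real.Gamma (b+1) : ℝ) : ℂ)
      = ((Real.Gamma (a+1+(b+1)) * ∫ u in (0:ℝ)..1, u ^ a * (1 - u) ^ b : ℝ) : ℂ) := by
    push_cast
    rw [← Complex.Gamma_ofReal, ← Complex.Gamma_ofReal, ← Complex.Gamma_ofReal]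
    push_cast at hG ⊢
    convert hG using 2
  have hG3 := Complex.ofReal_inj.mp hG2
  have hΓpos : 0 < Real.Gamma (a+1+(b+1)) := Real.Gamma_pos_of_pos (by linarith)
  rw [Beta]
  field_simp
  linarith [hG3]

lemma my_beta_scaled {a b : ℝ} (ha : -1 < a) (hb : -1 < b) {s : ℝ} (hs : 0 < s) :
    (∫ u in (0:ℝ)..s, u ^ a * (s - u) ^ b) = Beta (a+1) (b+1) * s ^ (1+a+b) := by
  have hc := intervalIntegral.integral_comp_mul_left
    (a := 0) (b := 1) (fun u => u ^ a * (s - u) ^ b) (ne_of_gt hs)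
  simp only [mul_zero, mul_one] at hc
  have hcong : (∫ x in (0:ℝ)..1, (s * x) ^ a * (s - s * x) ^ b)
      = ∫ x in (0:ℝ)..1, s ^ (a+b) * (x ^ a * (1 - x) ^ b) := by
    apply intervalIntegral.integral_congr
    intro x hx
    rw [Set.uIcc_of_le (by norm_num : (0:ℝ) ≤ 1)] at hx
    have hx0 : (0:ℝ) ≤ x := hx.1
    have hx1 : (0:ℝ) ≤ 1 - x := by linarith [hx.2]
    have e1 : (s * x) ^ a = s ^ a * x ^ a := Real.mul_rpow hs.le hx0
    have e2 : (s - s * x) ^ b = s ^ b * (1 - x) ^ b := by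
      rw [show s - s * x = s * (1 - x) by ring]
      exact Real.mul_rpow hs.le hx1
    simp only [e1, e2, Real.rpow_add hs]
    ring
  rw [hcong, intervalIntegral.integral_const_mul, my_beta_int ha hb] at hc
  rw [smul_eq_mul] at hc
  have hI : (∫ u in (0:ℝ)..s, u ^ a * (s - u) ^ b)
      = s * (s ^ (a+b) * Beta (a+1) (b+1)) := by
    field_simp at hc
    linarith
  rw [hI, show (1:ℝ)+a+b = 1+(a+b) by ring, Real.rpow_add hs 1 (a+b), Real.rpow_one]
  ring

set_option maxHeartbeats 1600000

theorem stmt_7 (a b : ℝ) (ha : -1 < a) (hb0 : -1 < b) (hb1 : b < 0) (hb2 : |b| < 1 + a) :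
    ∃ C > (0:ℝ), ∀ t s : ℝ, 0 < s → s < t →
      |R a b s t - s ^ (1 + a + b)| ≤ C * (t - s) ^ (1 + b) * s ^ a := by
  have hab : -b < 1 + a := by rwa [abs_of_neg hb1] at hb2
  have ha1 : (0:ℝ) < 1 + a := by linarith
  have hb1' : (0:ℝ) < 1 + b := by linarith
  have hBpos : 0 < Beta (a+1) (b+1) := by
    rw [Beta]
    exact div_pos (mul_pos (Real.Gamma_pos_of_pos (by linarith))
      (Real.Gamma_pos_of_pos (by linarith))) (Real.Gamma_pos_of_pos (by linarith))
  obtain ⟨B, hBdef⟩ : ∃ x : ℝ, x = Beta (a+1) (b+1) := ⟨_, rfl⟩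
  have hB : 0 < B := by rw [hBdef]; exact hBpos
  obtain ⟨c, hcdef⟩ : ∃ x : ℝ, x = 1 / (2 * B) := ⟨_, rfl⟩
  have hc : 0 < c := by rw [hcdef]; positivity
  have h2negA : 0 < (2:ℝ) ^ (-a) := Real.rpow_pos_of_pos (by norm_num) _
  obtain ⟨K1, hK1def⟩ : ∃ x : ℝ, x = (-b) * 2 ^ (-a) / (1 + a) := ⟨_, rfl⟩
  obtain ⟨K2, hK2def⟩ : ∃ x : ℝ, x = (1 + 2 ^ (-a)) / (1 + b) := ⟨_, rfl⟩
  have hK1 : 0 < K1 := by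
    rw [hK1def]; exact div_pos (mul_pos (by linarith) h2negA) ha1
  have hK2 : 0 < K2 := by
    rw [hK2def]; exact div_pos (by linarith) hb1'
  have h2b : (0:ℝ) < 2 ^ b := Real.rpow_pos_of_pos (by norm_num) _
  refine ⟨(2:ℝ) ^ b + c * (K1 + K2), by positivity, ?_⟩
  intro t s hs hst
  obtain ⟨δ, hδdef⟩ : ∃ x : ℝ, x = t - s := ⟨_, rfl⟩
  rw [show t - s = δ from hδdef.symm]
  have hδ : 0 < δ := by rw [hδdef]; linarith
  have hδ1b : 0 < δ ^ (1+b) := Real.rpow_pos_of_pos hδ _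
  have hsa : 0 < s ^ a := Real.rpow_pos_of_pos hs _
  -- integrability
  have hJsInt : IntervalIntegrable (fun u => u ^ a * (s - u) ^ b) volume 0 s :=
    my_intInt ha hb0 hs le_rfl
  have hJtInt : IntervalIntegrable (fun u => u ^ a * (t - u) ^ b) volume 0 s :=
    my_intInt ha hb0 hs hst.le
  obtain ⟨Js, hJsdef⟩ : ∃ x : ℝ, x = ∫ u in (0:ℝ)..s, u ^ a * (s - u) ^ b := ⟨_, rfl⟩
  obtain ⟨Jt, hJtdef⟩ : ∃ x : ℝ, x = ∫ u in (0:ℝ)..s, u ^ a * (t - u) ^ b := ⟨_, rfl⟩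
  -- Step A: R = c * (Js + Jt)
  have hRval : R a b s t = c * (Js + Jt) := by
    rw [R, min_eq_left hst.le]
    have hadd : (∫ u in (0:ℝ)..s, u ^ a * ((s - u) ^ b + (t - u) ^ b)) = Js + Jt := by
      rw [hJsdef, hJtdef, ← intervalIntegral.integral_add hJsInt hJtInt]
      exact intervalIntegral.integral_congr (fun x _ => by ring)
    rw [hadd, ← hBdef, ← hcdef]
  -- Step B
  have hJsval : Js = B * s ^ (1+a+b) := by
    rw [hJsdef, hBdef]; exact my_beta_scaled ha hb0 hs
  have h2cB : c * B = 1/2 := by rw [hcdef]; field_simp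
  have hcJs : c * Js = 1/2 * s ^ (1+a+b) := by
    rw [hJsval, ← mul_assoc, h2cB]
  -- Jt ≤ Js
  have hJtJs : Jt ≤ Js := by
    rw [hJsdef, hJtdef]
    apply my_integral_mono_Ico hs.le hJtInt hJsInt
    intro u hu
    apply mul_le_mul_of_nonneg_left _ (Real.rpow_nonneg hu.1 a)
    exact Real.rpow_le_rpow_of_nonpos (by linarith [hu.2]) (by linarith) hb1.le
  have hJt0 : 0 ≤ Jt := by
    rw [hJtdef]
    apply intervalIntegral.integral_nonneg hs.le
    intro u hu
    apply mul_nonneg (Real.rpow_nonneg hu.1 a)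
    exact Real.rpow_nonneg (by linarith [hu.2]) b
  -- the absolute value
  have hAbs : |R a b s t - s ^ (1 + a + b)| = c * (Js - Jt) := by
    have hkey : R a b s t - s ^ (1 + a + b) = -(c * (Js - Jt)) := by
      rw [hRval]; linear_combination 2 * hcJs
    rw [hkey, abs_neg, abs_of_nonneg (mul_nonneg hc.le (by linarith))]
  rw [hAbs]
  -- key decomposition of s^(1+a+b)
  have hsplit_pow : s ^ (1+a+b) = s ^ (1+b) * s ^ a := by
    rw [show (1:ℝ)+a+b = (1+b)+a by ring, Real.rpow_add hs]
  rcases le_or_gt s (2*δ) with hcase | hcase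
  · -- case 1 : s ≤ 2δ
    have h1 : c * (Js - Jt) ≤ c * Js :=
      mul_le_mul_of_nonneg_left (by linarith) hc.le
    have h3 : s ^ (1+b) ≤ (2*δ) ^ (1+b) :=
      Real.rpow_le_rpow hs.le hcase (by linarith)
    have h4 : (2*δ) ^ (1+b) = 2 * 2^b * δ ^ (1+b) := by
      rw [Real.mul_rpow (by norm_num) hδ.le,
        Real.rpow_add (show (0:ℝ) < 2 by norm_num) 1 b, Real.rpow_one]
    have h5 : c * (Js - Jt) ≤ 2^b * δ ^ (1+b) * s ^ a := by
      have h6 := mul_le_mul_of_nonneg_right h3 hsa.le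
      calc c * (Js - Jt) ≤ 1/2 * s ^ (1+a+b) := by linarith [hcJs]
        _ = 1/2 * (s ^ (1+b) * s ^ a) := by rw [hsplit_pow]
        _ ≤ 1/2 * ((2*δ) ^ (1+b) * s ^ a) := by linarith
        _ = 2^b * δ ^ (1+b) * s ^ a := by rw [h4]; ring
    have hrest : 0 ≤ c * (K1 + K2) * (δ ^ (1+b) * s ^ a) :=
      mul_nonneg (mul_nonneg hc.le (by linarith)) (by positivity)
    have hexp : (2^b + c * (K1 + K2)) * δ ^ (1+b) * s ^ a
        = 2^b * δ ^ (1+b) * s ^ a + c * (K1 + K2) * (δ ^ (1+b) * s ^ a) := by ring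
    rw [hexp]
    linarith
  · -- case 2 : δ ≤ s/2
    have hδs2 : δ ≤ s/2 := by linarith
    have hs2 : (0:ℝ) < s/2 := by linarith
    -- split the integrals at s/2
    have hsubL : Set.uIcc (0:ℝ) (s/2) ⊆ Set.uIcc (0:ℝ) s := by
      rw [Set.uIcc_of_le hs2.le, Set.uIcc_of_le hs.le]
      exact Set.Icc_subset_Icc le_rfl (by linarith)
    have hsubR : Set.uIcc (s/2) s ⊆ Set.uIcc (0:ℝ) s := by
      rw [Set.uIcc_of_le (by linarith), Set.uIcc_of_le hs.le]
      exact Set.Icc_subset_Icc (by linarith) le_rfl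
    have hJs1 := hJsInt.mono_set hsubL
    have hJs2 := hJsInt.mono_set hsubR
    have hJt1 := hJtInt.mono_set hsubL
    have hJt2 := hJtInt.mono_set hsubR
    have hsplitJs : Js = (∫ u in (0:ℝ)..(s/2), u ^ a * (s - u) ^ b)
        + ∫ u in (s/2)..s, u ^ a * (s - u) ^ b := by
      rw [hJsdef]
      exact (intervalIntegral.integral_add_adjacent_intervals hJs1 hJs2).symm
    have hsplitJt : Jt = (∫ u in (0:ℝ)..(s/2), u ^ a * (t - u) ^ b)
        + ∫ u in (s/2)..s, u ^ a * (t - u) ^ b := by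
      rw [hJtdef]
      exact (intervalIntegral.integral_add_adjacent_intervals hJt1 hJt2).symm
    -- E1 bound
    have hE1 : (∫ u in (0:ℝ)..(s/2), u ^ a * (s - u) ^ b)
        - (∫ u in (0:ℝ)..(s/2), u ^ a * (t - u) ^ b) ≤ K1 * (δ ^ (1+b) * s ^ a) := by
      have hK : ∀ u ∈ Set.Ico (0:ℝ) (s/2),
          u ^ a * (s - u) ^ b - u ^ a * (t - u) ^ b
            ≤ ((-b) * δ * (s/2) ^ (b-1)) * u ^ a := by
        intro u hu
        have hx : s/2 ≤ s - u := by linarith [hu.2]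
        have hxpos : 0 < s - u := by linarith
        have htu : t - u = (s - u) * (1 + δ/(s-u)) := by
          field_simp
          rw [hδdef]; ring
        have hbern : 1 + b * (δ/(s-u)) ≤ (1 + δ/(s-u)) ^ b :=
          my_bernoulli_neg (by positivity) (by linarith) hb1.le
        have hmul : (t - u) ^ b = (s-u) ^ b * (1 + δ/(s-u)) ^ b := by
          rw [htu]; exact Real.mul_rpow hxpos.le (by positivity)
        have hxb : 0 < (s-u) ^ b := Real.rpow_pos_of_pos hxpos _
        have hgb : (s - u) ^ b - (t - u) ^ b ≤ (-b) * δ * (s-u) ^ (b-1) := by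
          rw [hmul, Real.rpow_sub hxpos, Real.rpow_one]
          have h1 := mul_le_mul_of_nonneg_left hbern hxb.le
          have h2 : (s-u)^b * (1 + b * (δ/(s-u)))
              = (s-u)^b + b * δ * ((s-u)^b / (s-u)) := by
            field_simp
          rw [h2] at h1
          linarith
        have hmono : (s-u) ^ (b-1) ≤ (s/2) ^ (b-1) :=
          Real.rpow_le_rpow_of_nonpos hs2 hx (by linarith)
        have hbd : 0 ≤ (-b) * δ := mul_nonneg (by linarith) hδ.le
        have hg : (s - u) ^ b - (t - u) ^ b ≤ (-b) * δ * (s/2) ^ (b-1) := by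
          have := mul_le_mul_of_nonneg_left hmono hbd
          linarith
        have hua : 0 ≤ u ^ a := Real.rpow_nonneg hu.1 a
        have h9 := mul_le_mul_of_nonneg_left hg hua
        have h10 : u^a*(s-u)^b - u^a*(t-u)^b = u^a * ((s - u) ^ b - (t - u) ^ b) := by ring
        have h11 : u^a * ((-b)*δ*(s/2)^(b-1)) = ((-b)*δ*(s/2)^(b-1))*u^a := by ring
        rw [h10, ← h11]
        exact h9
      have hdiff : (∫ u in (0:ℝ)..(s/2), u ^ a * (s - u) ^ b)
          - (∫ u in (0:ℝ)..(s/2), u ^ a * (t - u) ^ b)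
          = ∫ u in (0:ℝ)..(s/2), (u ^ a * (s - u) ^ b - u ^ a * (t - u) ^ b) :=
        (intervalIntegral.integral_sub hJs1 hJt1).symm
      rw [hdiff]
      have hint2 : IntervalIntegrable (fun u => ((-b) * δ * (s/2) ^ (b-1)) * u ^ a)
          volume 0 (s/2) :=
        (intervalIntegral.intervalIntegrable_rpow' ha).const_mul _
      have step := my_integral_mono_Ico hs2.le (hJs1.sub hJt1) hint2 hK
      have hval : (∫ u in (0:ℝ)..(s/2), ((-b) * δ * (s/2) ^ (b-1)) * u ^ a)
          = ((-b) * δ * (s/2) ^ (b-1)) * ((s/2) ^ (a+1) / (a+1)) := by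
        rw [intervalIntegral.integral_const_mul, integral_rpow (Or.inl ha),
          Real.zero_rpow (ne_of_gt (show (0:ℝ) < a+1 by linarith)), sub_zero]
      rw [hval] at step
      refine le_trans step ?_
      -- arithmetic: (-b) δ (s/2)^(b-1) (s/2)^(a+1)/(a+1) ≤ K1 δ^(1+b) s^a
      have e1 : (s/2) ^ (b-1) * (s/2) ^ (a+1) = (s/2) ^ b * (s/2) ^ a := by
        rw [← Real.rpow_add hs2, ← Real.rpow_add hs2]
        norm_num
      have e2 : (s/2) ^ b ≤ δ ^ b := Real.rpow_le_rpow_of_nonpos hδ hδs2 hb1.le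
      have e3 : (s/2) ^ a = s ^ a * 2 ^ (-a) := by
        rw [show s/2 = s * 2⁻¹ by ring, Real.mul_rpow hs.le (by norm_num),
          Real.rpow_neg (by norm_num : (0:ℝ) ≤ 2), Real.inv_rpow (by norm_num : (0:ℝ) ≤ 2)]
      have e4 : δ * δ ^ b = δ ^ (1+b) := by
        rw [Real.rpow_add hδ, Real.rpow_one]
      have hδb : 0 < δ ^ b := Real.rpow_pos_of_pos hδ _
      have hs2a : 0 < (s/2) ^ a := Real.rpow_pos_of_pos hs2 _
      have hane : a + 1 ≠ 0 := ne_of_gt (by linarith)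
      have h1ane : (1:ℝ) + a ≠ 0 := ne_of_gt ha1
      calc (-b) * δ * (s/2) ^ (b-1) * ((s/2) ^ (a+1) / (a+1))
          = (-b) / (1+a) * (δ * ((s/2) ^ (b-1) * (s/2) ^ (a+1))) := by
            field_simp
            ring
        _ = (-b) / (1+a) * (δ * ((s/2) ^ b * (s/2) ^ a)) := by rw [e1]
        _ ≤ (-b) / (1+a) * (δ * (δ ^ b * (s/2) ^ a)) := by
            apply mul_le_mul_of_nonneg_left _ (div_nonneg (by linarith) (by linarith))
            apply mul_le_mul_of_nonneg_left _ hδ.le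
            exact mul_le_mul_of_nonneg_right e2 hs2a.le
        _ = (-b) / (1+a) * 2 ^ (-a) * (δ ^ (1+b) * s ^ a) := by
            rw [e3, ← e4]; ring
        _ = K1 * (δ ^ (1+b) * s ^ a) := by rw [hK1def]; ring
    -- E2 bound
    have hE2 : (∫ u in (s/2)..s, u ^ a * (s - u) ^ b)
        - (∫ u in (s/2)..s, u ^ a * (t - u) ^ b) ≤ K2 * (δ ^ (1+b) * s ^ a) := by
      obtain ⟨M, hMdef⟩ : ∃ x : ℝ, x = 1 + (2:ℝ) ^ (-a) := ⟨_, rfl⟩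
      have hM : 0 < M := by rw [hMdef]; linarith
      have hsInt2 : IntervalIntegrable (fun u => (s - u) ^ b) volume (s/2) s :=
        my_intInt_sub hb0
      have htInt2 : IntervalIntegrable (fun u => (t - u) ^ b) volume (s/2) s :=
        my_intInt_sub hb0
      have hcmpInt : IntervalIntegrable
          (fun u => M * s ^ a * ((s - u) ^ b - (t - u) ^ b)) volume (s/2) s :=
        (hsInt2.sub htInt2).const_mul _
      have hK : ∀ u ∈ Set.Ico (s/2) s,
          u ^ a * (s - u) ^ b - u ^ a * (t - u) ^ b
            ≤ M * s ^ a * ((s - u) ^ b - (t - u) ^ b) := by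
        intro u hu
        have hupos : 0 < u := lt_of_lt_of_le hs2 hu.1
        have hxpos : 0 < s - u := by linarith [hu.2]
        have hg : 0 ≤ (s - u) ^ b - (t - u) ^ b := by
          have := Real.rpow_le_rpow_of_nonpos hxpos (by linarith : s - u ≤ t - u) hb1.le
          linarith
        have hua : u ^ a ≤ M * s ^ a := by
          rcases le_or_gt 0 a with haa | haa
          · have h1 : u ^ a ≤ s ^ a := Real.rpow_le_rpow hupos.le hu.2.le haa
            have h2 : 0 < 2 ^ (-a) * s ^ a := mul_pos h2negA hsa
            rw [hMdef]
            nlinarith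
          · have h1 : u ^ a ≤ (s/2) ^ a :=
              Real.rpow_le_rpow_of_nonpos hs2 hu.1 haa.le
            have h2 : (s/2) ^ a = s ^ a * 2 ^ (-a) := by
              rw [show s/2 = s * 2⁻¹ by ring, Real.mul_rpow hs.le (by norm_num),
                Real.rpow_neg (by norm_num : (0:ℝ) ≤ 2),
                Real.inv_rpow (by norm_num : (0:ℝ) ≤ 2)]
            rw [hMdef]
            nlinarith
        have h9 := mul_le_mul_of_nonneg_right hua hg
        have h10 : u^a*(s-u)^b - u^a*(t-u)^b = u^a * ((s - u) ^ b - (t - u) ^ b) := by ring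
        rw [h10]
        exact h9
      have hdiff : (∫ u in (s/2)..s, u ^ a * (s - u) ^ b)
          - (∫ u in (s/2)..s, u ^ a * (t - u) ^ b)
          = ∫ u in (s/2)..s, (u ^ a * (s - u) ^ b - u ^ a * (t - u) ^ b) :=
        (intervalIntegral.integral_sub hJs2 hJt2).symm
      rw [hdiff]
      have step := my_integral_mono_Ico (by linarith : s/2 ≤ s) (hJs2.sub hJt2) hcmpInt hK
      refine le_trans step ?_
      have hsval : (∫ u in (s/2)..s, (s - u) ^ b) = (s/2) ^ (b+1) / (b+1) := by
        rw [show (∫ u in (s/2)..s, (s - u) ^ b)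
            = ∫ u in (s/2)..s, (fun v : ℝ => v ^ b) (s - u) from rfl,
          intervalIntegral.integral_comp_sub_left (fun v : ℝ => v ^ b) s]
        rw [show s - s = (0:ℝ) by ring, show s - s/2 = s/2 by ring,
          integral_rpow (Or.inl hb0),
          Real.zero_rpow (ne_of_gt (show (0:ℝ) < b+1 by linarith)), sub_zero]
      have htval : (∫ u in (s/2)..s, (t - u) ^ b)
          = ((t - s/2) ^ (b+1) - δ ^ (b+1)) / (b+1) := by
        rw [show (∫ u in (s/2)..s, (t - u) ^ b)
            = ∫ u in (s/2)..s, (fun v : ℝ => v ^ b) (t - u) from rfl,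
          intervalIntegral.integral_comp_sub_left (fun v : ℝ => v ^ b) t]
        rw [show t - s = δ from hδdef.symm, integral_rpow (Or.inl hb0)]
      have hsplit2 : (∫ u in (s/2)..s, M * s ^ a * ((s - u) ^ b - (t - u) ^ b))
          = M * s ^ a * ((∫ u in (s/2)..s, (s - u) ^ b) - ∫ u in (s/2)..s, (t - u) ^ b) := by
        rw [intervalIntegral.integral_const_mul, intervalIntegral.integral_sub hsInt2 htInt2]
      rw [hsplit2, hsval, htval]
      have hmono2 : (s/2) ^ (b+1) ≤ (t - s/2) ^ (b+1) :=
        Real.rpow_le_rpow hs2.le (by linarith) (by linarith)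
      have hABle : (s/2) ^ (b+1) / (b+1) - ((t - s/2) ^ (b+1) - δ ^ (b+1)) / (b+1)
          ≤ δ ^ (b+1) / (b+1) := by
        rw [div_sub_div_same, div_le_div_iff_of_pos_right (show (0:ℝ) < b + 1 by linarith)]
        linarith
      have hδb1 : δ ^ (b+1) = δ ^ (1+b) := by rw [add_comm b 1]
      calc M * s ^ a * ((s/2) ^ (b+1) / (b+1) - ((t - s/2) ^ (b+1) - δ ^ (b+1)) / (b+1))
          ≤ M * s ^ a * (δ ^ (b+1) / (b+1)) := by
            apply mul_le_mul_of_nonneg_left hABle (by positivity)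
        _ = K2 * (δ ^ (1+b) * s ^ a) := by
            have h1bne : (1:ℝ) + b ≠ 0 := ne_of_gt hb1'
            have hb1ne : b + 1 ≠ 0 := ne_of_gt (by linarith)
            rw [hK2def, hMdef]
            field_simp
            ring
    -- combine
    have hD : Js - Jt ≤ (K1 + K2) * (δ ^ (1+b) * s ^ a) := by
      rw [hsplitJs, hsplitJt]
      have hexp : (K1 + K2) * (δ ^ (1+b) * s ^ a)
          = K1 * (δ ^ (1+b) * s ^ a) + K2 * (δ ^ (1+b) * s ^ a) := by ring
      rw [hexp]
      linarith
    have hfin : c * (Js - Jt) ≤ c * ((K1 + K2) * (δ ^ (1+b) * s ^ a)) :=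
      mul_le_mul_of_nonneg_left hD hc.le
    have hexp2 : (2^b + c * (K1 + K2)) * δ ^ (1+b) * s ^ a
        = 2^b * (δ ^ (1+b) * s ^ a) + c * ((K1 + K2) * (δ ^ (1+b) * s ^ a)) := by ring
    rw [hexp2]
    have : 0 ≤ 2^b * (δ ^ (1+b) * s ^ a) := by positivity
    linarith
end

section
/- Let a, b be real numbers with a > -1, -1 < b < 0 and |b| < 1 + a, and let β satisfy 1+b < β < 1. Then there exists a constant C > 0, depending only on a, b, β, such that for all r > 0, ε > 0 and s > r + ε: 0 ≤ R_{a,b}(s, r+ε) - R_{a,b}(s, r) ≤ C · ε^β · ( max(r^a, s^a) · (s-r)^{1+b-β} + (r+ε)^{1+a+b-β} ). (The middle quantity equals E[B^{a,b}_s (B^{a,b}_{r+ε} - B^{a,b}_r)].) -/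
/-!
For `t < s` the minimum in `R a b s t` is `t`, and the part `∫₀ᵗ uᵃ (t - u)ᵇ du` of the integral is
the Beta integral `t^(1+a+b) Β(a+1, b+1)`. Hence `R(s, r+ε) - R(s, r)` is the sum of
`(2Β)⁻¹ ∫_r^{r+ε} uᵃ (s - u)ᵇ du`, whose weight `uᵃ` is at most `max (rᵃ) (sᵃ)`, and
`((r+ε)^(1+a+b) - r^(1+a+b)) / 2`. Both are increments of a power `x ^ θ` over an interval of
length `ε`, and `x^θ - y^θ ≤ max 1 θ · (x - y)^β · x^(θ-β)` for `0 ≤ y ≤ x`, `β ≤ 1`, because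
`1 - t^θ ≤ max 1 θ · (1 - t) ≤ max 1 θ · (1 - t)^β` on `[0, 1]`.
-/

open Real MeasureTheory

lemma Complex.betaIntegral_ofReal {x y : ℝ} (hx : 0 < x) (hy : 0 < y) :
    Complex.betaIntegral x y = Beta x y := by
  have h := Complex.Gamma_mul_Gamma_eq_betaIntegral (s := x) (t := y) (by simpa) (by simpa)
  have hxy : (Real.Gamma (x + y) : ℂ) ≠ 0 := by
    exact_mod_cast (Gamma_pos_of_pos (add_pos hx hy)).ne'
  rw [← Complex.ofReal_add, Complex.Gamma_ofReal, Complex.Gamma_ofReal, Complex.Gamma_ofReal] at h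
  rw [Beta, Complex.ofReal_div, Complex.ofReal_mul, h, mul_div_cancel_left₀ _ hxy]

lemma integral_rpow_mul_sub_rpow {a b T : ℝ} (ha : -1 < a) (hb : -1 < b) (hT : 0 < T) :
    ∫ u in (0:ℝ)..T, u ^ a * (T - u) ^ b = T ^ (1 + a + b) * Beta (a + 1) (b + 1) := by
  apply Complex.ofReal_injective
  have hscaled := Complex.betaIntegral_scaled ((a + 1 : ℝ) : ℂ) ((b + 1 : ℝ) : ℂ) hT
  rw [Complex.betaIntegral_ofReal (by linarith) (by linarith)] at hscaled
  push_cast at hscaled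
  rw [show (a : ℂ) + 1 + (b + 1) - 1 = 1 + a + b by ring, add_sub_cancel_right,
    add_sub_cancel_right] at hscaled
  rw [Complex.ofReal_mul, Complex.ofReal_cpow hT.le]
  push_cast
  rw [← hscaled, ← intervalIntegral.integral_ofReal]
  refine intervalIntegral.integral_congr fun u hu => ?_
  rw [Set.uIcc_of_le hT.le] at hu
  simp only [Complex.ofReal_mul]
  rw [Complex.ofReal_cpow hu.1, Complex.ofReal_cpow (sub_nonneg.2 hu.2), Complex.ofReal_sub]

lemma intervalIntegrable_rpow_mul_sub_rpow {a b c T : ℝ} (ha : -1 < a) (hc : 0 ≤ c)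
    (hcT : c < T) : IntervalIntegrable (fun u => u ^ a * (T - u) ^ b) volume 0 c := by
  refine (intervalIntegral.intervalIntegrable_rpow' ha).mul_continuousOn
    (ContinuousOn.rpow_const (by fun_prop) fun u hu => Or.inl ?_)
  rw [Set.uIcc_of_le hc] at hu
  linarith [hu.2]

lemma intervalIntegrable_rpow_mul_sub_rpow_self {a b T : ℝ} (ha : -1 < a) (hb : -1 < b)
    (hT : 0 < T) : IntervalIntegrable (fun u => u ^ a * (T - u) ^ b) volume 0 T := by
  have hleft :=
    intervalIntegrable_rpow_mul_sub_rpow (b := b) ha (half_pos hT).le (half_lt_self hT)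
  have hright := (intervalIntegrable_rpow_mul_sub_rpow (b := a) hb (half_pos hT).le
    (half_lt_self hT)).comp_sub_left T
  simp only [sub_sub_cancel, sub_zero, sub_half] at hright
  exact hleft.trans (by simpa only [mul_comm] using hright.symm)

lemma R_eq_of_lt {a b s t : ℝ} (ha : -1 < a) (hb : -1 < b) (ht : 0 < t) (hts : t < s) :
    R a b s t =
      (∫ u in (0:ℝ)..t, u ^ a * (s - u) ^ b) / (2 * Beta (a + 1) (b + 1)) +
        t ^ (1 + a + b) / 2 := by
  have hB : Beta (a + 1) (b + 1) ≠ 0 := (Beta_pos (by linarith) (by linarith)).ne'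
  rw [R, min_eq_right hts.le]
  simp only [mul_add]
  rw [intervalIntegral.integral_add (intervalIntegrable_rpow_mul_sub_rpow ha ht.le hts)
    (intervalIntegrable_rpow_mul_sub_rpow_self ha hb ht), integral_rpow_mul_sub_rpow ha hb ht]
  field_simp

lemma R_sub_R {a b s t₁ t₂ : ℝ} (ha : -1 < a) (hb : -1 < b) (ht₁ : 0 < t₁) (ht : t₁ ≤ t₂)
    (hts : t₂ < s) :
    R a b s t₂ - R a b s t₁ =
      (∫ u in t₁..t₂, u ^ a * (s - u) ^ b) / (2 * Beta (a + 1) (b + 1)) +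
        (t₂ ^ (1 + a + b) - t₁ ^ (1 + a + b)) / 2 := by
  rw [R_eq_of_lt ha hb (ht₁.trans_le ht) hts, R_eq_of_lt ha hb ht₁ (ht.trans_lt hts),
    ← intervalIntegral.integral_interval_sub_left
      (intervalIntegrable_rpow_mul_sub_rpow ha (ht₁.le.trans ht) hts)
      (intervalIntegrable_rpow_mul_sub_rpow ha ht₁.le (ht.trans_lt hts))]
  ring

lemma rpow_le_max_rpow {r s u : ℝ} (a : ℝ) (hr : 0 < r) (hru : r ≤ u) (hus : u ≤ s) :
    u ^ a ≤ max (r ^ a) (s ^ a) := by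
  rcases le_total 0 a with ha | ha
  · exact (rpow_le_rpow (hr.le.trans hru) hus ha).trans (le_max_right _ _)
  · exact (rpow_le_rpow_of_nonpos hr hru ha).trans (le_max_left _ _)

lemma integral_rpow_mul_sub_rpow_le_s18 {a b r s t : ℝ} (hb : -1 < b) (hr : 0 < r) (hrt : r ≤ t)
    (hts : t < s) :
    ∫ u in r..t, u ^ a * (s - u) ^ b ≤
      max (r ^ a) (s ^ a) * (((s - r) ^ (1 + b) - (s - t) ^ (1 + b)) / (1 + b)) := by
  have hcont : ∀ c : ℝ, ContinuousOn (fun u => c * (s - u) ^ b) (Set.uIcc r t) := fun c =>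
    continuousOn_const.mul <| ContinuousOn.rpow_const (by fun_prop) fun u hu => Or.inl <| by
      rw [Set.uIcc_of_le hrt] at hu; linarith [hu.2]
  have hmono :
      ∫ u in r..t, u ^ a * (s - u) ^ b ≤ ∫ u in r..t, max (r ^ a) (s ^ a) * (s - u) ^ b := by
    refine intervalIntegral.integral_mono_on hrt ?_ (hcont _).intervalIntegrable fun u hu => ?_
    · refine (ContinuousOn.mul ?_ (by simpa using hcont 1)).intervalIntegrable
      exact ContinuousOn.rpow_const continuousOn_id fun u hu => Or.inl <| by
        rw [Set.uIcc_of_le hrt] at hu; exact (hr.trans_le hu.1).ne'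
    · exact mul_le_mul_of_nonneg_right (rpow_le_max_rpow a hr hu.1 (hu.2.trans hts.le))
        (rpow_nonneg (by linarith [hu.2]) b)
  have hprimitive :
      ∫ u in r..t, (s - u) ^ b = ((s - r) ^ (1 + b) - (s - t) ^ (1 + b)) / (1 + b) := by
    rw [intervalIntegral.integral_comp_sub_left (fun x => x ^ b) s, integral_rpow (Or.inl hb),
      add_comm b 1]
  rwa [intervalIntegral.integral_const_mul, hprimitive] at hmono

lemma one_sub_rpow_le {t θ : ℝ} (ht₀ : 0 ≤ t) (ht₁ : t ≤ 1) :
    1 - t ^ θ ≤ max 1 θ * (1 - t) := by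
  rcases le_total θ 1 with hθ | hθ
  · nlinarith [self_le_rpow_of_le_one ht₀ ht₁ hθ, le_max_left 1 θ]
  · have := one_add_mul_self_le_rpow_one_add (by linarith : -1 ≤ t - 1) hθ
    rw [add_sub_cancel] at this
    nlinarith [le_max_right 1 θ]

lemma rpow_sub_rpow_le {x y θ β : ℝ} (hy : 0 ≤ y) (hyx : y ≤ x) (hβ : β ≤ 1) :
    x ^ θ - y ^ θ ≤ max 1 θ * (x - y) ^ β * x ^ (θ - β) := by
  have hmax : 0 ≤ max 1 θ := zero_le_one.trans (le_max_left 1 θ)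
  rcases (hy.trans hyx).eq_or_lt with hx | hx
  · obtain rfl : y = 0 := le_antisymm (hx ▸ hyx) hy
    simp only [← hx, sub_self]
    exact mul_nonneg (mul_nonneg hmax (rpow_nonneg le_rfl β)) (rpow_nonneg le_rfl _)
  set t := y / x
  have ht₀ : 0 ≤ t := div_nonneg hy hx.le
  have ht₁ : t ≤ 1 := div_le_one_of_le₀ hyx hx.le
  have hyt : y = x * t := (mul_div_cancel₀ y hx.ne').symm
  calc x ^ θ - y ^ θ = x ^ θ * (1 - t ^ θ) := by rw [hyt, mul_rpow hx.le ht₀]; ring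
    _ ≤ x ^ θ * (max 1 θ * (1 - t) ^ β) := by
        gcongr
        exact (one_sub_rpow_le ht₀ ht₁).trans
          (by gcongr; exact self_le_rpow_of_le_one (by linarith) (by linarith) hβ)
    _ = max 1 θ * (x - y) ^ β * x ^ (θ - β) := by
        have hsplit : x ^ θ = x ^ β * x ^ (θ - β) := by
          rw [← rpow_add hx, add_sub_cancel]
        rw [hyt, ← mul_one_sub, mul_rpow hx.le (by linarith), hsplit]
        ring

lemma R_sub_R_nonneg {a b s t₁ t₂ : ℝ} (ha : -1 < a) (hb : -1 < b) (hθ : 0 ≤ 1 + a + b)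
    (ht₁ : 0 < t₁) (ht : t₁ ≤ t₂) (hts : t₂ < s) : 0 ≤ R a b s t₂ - R a b s t₁ := by
  have hK : 0 < Beta (a + 1) (b + 1) := Beta_pos (by linarith) (by linarith)
  have hI : 0 ≤ ∫ u in t₁..t₂, u ^ a * (s - u) ^ b :=
    intervalIntegral.integral_nonneg ht fun u hu =>
      mul_nonneg (rpow_nonneg (by linarith [hu.1]) a) (rpow_nonneg (by linarith [hu.2]) b)
  rw [R_sub_R ha hb ht₁ ht hts]
  exact add_nonneg (by positivity)
    (div_nonneg (sub_nonneg.2 (rpow_le_rpow ht₁.le ht hθ)) two_pos.le)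

lemma R_sub_R_le {a b β s t₁ t₂ : ℝ} (ha : -1 < a) (hb : -1 < b) (hβ : β ≤ 1)
    (ht₁ : 0 < t₁) (ht : t₁ ≤ t₂) (hts : t₂ < s) :
    R a b s t₂ - R a b s t₁ ≤
      max 1 (1 + b) / (2 * Beta (a + 1) (b + 1) * (1 + b)) *
          ((t₂ - t₁) ^ β * (max (t₁ ^ a) (s ^ a) * (s - t₁) ^ (1 + b - β))) +
        max 1 (1 + a + b) / 2 * ((t₂ - t₁) ^ β * t₂ ^ (1 + a + b - β)) := by
  have hK : 0 < Beta (a + 1) (b + 1) := Beta_pos (by linarith) (by linarith)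
  have hb' : 0 < 1 + b := by linarith
  have hleft := rpow_sub_rpow_le (θ := 1 + b) (sub_nonneg.2 hts.le) (sub_le_sub_left ht s) hβ
  rw [sub_sub_sub_cancel_left] at hleft
  rw [R_sub_R ha hb ht₁ ht hts]
  calc _ ≤ max (t₁ ^ a) (s ^ a) *
          (max 1 (1 + b) * (t₂ - t₁) ^ β * (s - t₁) ^ (1 + b - β) / (1 + b)) /
          (2 * Beta (a + 1) (b + 1)) +
        max 1 (1 + a + b) * (t₂ - t₁) ^ β * t₂ ^ (1 + a + b - β) / 2 := by
        gcongr
        · exact (integral_rpow_mul_sub_rpow_le_s18 hb ht₁ ht hts).trans (by gcongr)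
        · exact rpow_sub_rpow_le ht₁.le ht hβ
    _ = _ := by field_simp

theorem stmt_18_general (a b β : ℝ) (ha : -1 < a) (hb0 : -1 < b) (hb2 : |b| < 1 + a)
    (hβ2 : β < 1) :
    ∃ C > (0:ℝ), ∀ r ε s : ℝ, 0 < r → 0 < ε → r + ε < s →
      0 ≤ R a b s (r + ε) - R a b s r ∧
        R a b s (r + ε) - R a b s r ≤
          C * ε ^ β *
            (max (r ^ a) (s ^ a) * (s - r) ^ (1 + b - β) + (r + ε) ^ (1 + a + b - β)) := by
  have hθ : 0 ≤ 1 + a + b := by linarith [neg_abs_le b]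
  have hb : 0 < 1 + b := by linarith
  have hK : 0 < Beta (a + 1) (b + 1) := Beta_pos (by linarith) (by linarith)
  set c₁ := max 1 (1 + b) / (2 * Beta (a + 1) (b + 1) * (1 + b))
  set c₂ := max 1 (1 + a + b) / 2
  have hc₁ : 0 ≤ c₁ := by positivity
  have hc₂ : 0 ≤ c₂ := by positivity
  refine ⟨c₁ + c₂, by positivity, fun r ε s hr hε hs => ?_⟩
  have hrε : r ≤ r + ε := le_add_of_nonneg_right hε.le
  refine ⟨R_sub_R_nonneg ha hb0 hθ hr hrε hs, ?_⟩
  have hbound := R_sub_R_le ha hb0 hβ2.le hr hrε hs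
  rw [add_sub_cancel_left] at hbound
  change _ ≤ c₁ * _ + c₂ * _ at hbound
  have hX : 0 ≤ ε ^ β * (max (r ^ a) (s ^ a) * (s - r) ^ (1 + b - β)) :=
    mul_nonneg (rpow_nonneg hε.le β)
      (mul_nonneg ((rpow_nonneg hr.le a).trans (le_max_left _ _)) (rpow_nonneg (by linarith) _))
  have hY : 0 ≤ ε ^ β * (r + ε) ^ (1 + a + b - β) :=
    mul_nonneg (rpow_nonneg hε.le β) (rpow_nonneg (by linarith) _)
  nlinarith [mul_nonneg hc₁ hY, mul_nonneg hc₂ hX]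

theorem stmt_18 (a b β : ℝ) (ha : -1 < a) (hb0 : -1 < b) (hb1 : b < 0) (hb2 : |b| < 1 + a)
    (hβ1 : 1 + b < β) (hβ2 : β < 1) :
    ∃ C > (0:ℝ), ∀ r ε s : ℝ, 0 < r → 0 < ε → r + ε < s →
      0 ≤ R a b s (r + ε) - R a b s r ∧
        R a b s (r + ε) - R a b s r ≤
          C * ε ^ β *
            (max (r ^ a) (s ^ a) * (s - r) ^ (1 + b - β) + (r + ε) ^ (1 + a + b - β)) :=
  stmt_18_general a b β ha hb0 hb2 hβ2
end
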